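/- arXiv:2010.03153 — 7 statements merged into one kernel-verified Lean document; each statement's English description precedes it below -/
import Mathlib

section
/- For every continuously differentiable function z : [0,1] → ℝ one has sup_{x∈[0,1]} |z(x)| ≤ 2((∫₀¹ z'(x)² dx)^{1/4}(∫₀¹ z(x)² dx)^{1/4} + (∫₀¹ z(x)² dx)^{1/2}), and moreover 2((∫₀¹ z'² dx)^{1/4}(∫₀¹ z² dx)^{1/4} + (∫₀¹ z² dx)^{1/2}) ≤ 3((∫₀¹ z'² dx)^{1/2} + (∫₀¹ z² dx)^{1/2}). -/
/-!
By the mean value theorem for integrals, `z ^ 2` equals its average over `[0, 1]` at some point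
`c`, and `z x ^ 2 - z c ^ 2 = 2 ∫_c^x z z'` is bounded by `2 ‖z‖ ‖z'‖` by Cauchy–Schwarz.
With `p = ‖z'‖ ^ (1/2)` and `q = ‖z‖ ^ (1/2)` this reads
`z x ^ 2 ≤ q⁴ + 2 p² q² ≤ (2 (p q + q²))²`, and the comparison of the two bounds is
`2 p q + 2 q² ≤ 3 p² + 3 q²`, i.e. `2 p q ≤ p² + q²`.
-/

open Set MeasureTheory
open scoped Interval

theorem integral_abs_mul_le_sqrt_mul_sqrt {α : Type*} [MeasurableSpace α] {μ : Measure α}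
    {f g : α → ℝ} (hf : MemLp f 2 μ) (hg : MemLp g 2 μ) :
    ∫ x, |f x * g x| ∂μ ≤ √(∫ x, f x ^ 2 ∂μ) * √(∫ x, g x ^ 2 ∂μ) := by
  have := integral_mul_norm_le_Lp_mul_Lq Real.HolderConjugate.two_two
    (by simpa using hf) (by simpa using hg)
  simpa [abs_mul, Real.sqrt_eq_rpow] using this

theorem Continuous.memLp_two_restrict_Ioc {f : ℝ → ℝ} (hf : Continuous f) (a b : ℝ) :
    MemLp f 2 (volume.restrict (Ioc a b)) :=
  (memLp_two_iff_integrable_sq hf.aestronglyMeasurable).2 (hf.pow 2).integrableOn_Ioc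

theorem intervalIntegral.abs_integral_le_integral_abs_of_mem_Icc {g : ℝ → ℝ} {a b x y : ℝ}
    (hg : IntervalIntegrable g volume a b) (hx : x ∈ Icc a b) (hy : y ∈ Icc a b) :
    |∫ t in x..y, g t| ≤ ∫ t in a..b, |g t| := by
  have hab : a ≤ b := hx.1.trans hx.2
  have hsub : Ι x y ⊆ Ι a b := uIoc_subset_uIoc_of_uIcc_subset_uIcc
    (uIcc_subset_uIcc (Icc_subset_uIcc hx) (Icc_subset_uIcc hy))
  rw [intervalIntegral.integral_of_le hab, ← uIoc_of_le hab]
  exact intervalIntegral.norm_integral_le_integral_norm_uIoc.trans <|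
    setIntegral_mono_set hg.abs.def' (ae_of_all _ fun t => norm_nonneg (g t)) (ae_of_all _ hsub)

theorem ContDiff.sq_le_interval_average_sq_add_two_mul_sqrt_mul_sqrt {z : ℝ → ℝ}
    (hz : ContDiff ℝ 1 z) {a b x : ℝ} (hab : a < b) (hx : x ∈ Icc a b) :
    z x ^ 2 ≤ (⨍ y in a..b, z y ^ 2) +
      2 * (√(∫ y in a..b, z y ^ 2) * √(∫ y in a..b, deriv z y ^ 2)) := by
  have hzc : Continuous z := hz.continuous
  have hz'c : Continuous (deriv z) := hz.continuous_deriv le_rfl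
  have hprod : Continuous fun t => z t * deriv z t := hzc.mul hz'c
  obtain ⟨c, hc, hc_avg⟩ :=
    exists_eq_interval_average (f := fun t => z t ^ 2) hab.ne (hzc.pow 2).continuousOn
  rw [uIoo_of_le hab.le] at hc
  have hderiv (t : ℝ) : HasDerivAt (fun t => z t ^ 2) (2 * (z t * deriv z t)) t := by
    simpa [mul_assoc] using (hz.differentiable one_ne_zero t).hasDerivAt.fun_pow 2
  have hftc : z x ^ 2 - z c ^ 2 = 2 * ∫ t in c..x, z t * deriv z t := by
    rw [← intervalIntegral.integral_const_mul, intervalIntegral.integral_eq_sub_of_hasDerivAt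
      (fun t _ => hderiv t) ((continuous_const.mul hprod).intervalIntegrable _ _)]
  have hbound := intervalIntegral.abs_integral_le_integral_abs_of_mem_Icc
    (hprod.intervalIntegrable a b) (Ioo_subset_Icc_self hc) hx
  have hcs := integral_abs_mul_le_sqrt_mul_sqrt (hzc.memLp_two_restrict_Ioc a b)
    (hz'c.memLp_two_restrict_Ioc a b)
  simp only [← intervalIntegral.integral_of_le hab.le] at hcs
  calc z x ^ 2 = z c ^ 2 + 2 * ∫ t in c..x, z t * deriv z t := by linarith
    _ ≤ z c ^ 2 + 2 * ∫ t in a..b, |z t * deriv z t| := by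
      gcongr; exact (le_abs_self _).trans hbound
    _ ≤ _ := by rw [hc_avg]; gcongr

theorem Real.sqrt_eq_sq_rpow_quarter {x : ℝ} (hx : 0 ≤ x) : √x = (x ^ ((1:ℝ)/4)) ^ 2 := by
  rw [Real.sqrt_eq_rpow, ← Real.rpow_natCast, ← Real.rpow_mul hx]
  norm_num

/-- Gagliardo–Nirenberg interpolation inequality on the unit interval
(Lemma 3.1, first part). -/
theorem gagliardo_nirenberg_unit_interval (z : ℝ → ℝ) (hz : ContDiff ℝ 1 z) :
    (∀ x ∈ Icc (0:ℝ) 1,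
      |z x| ≤ 2 * ((∫ y in (0:ℝ)..1, (deriv z y)^2) ^ ((1:ℝ)/4) *
        (∫ y in (0:ℝ)..1, (z y)^2) ^ ((1:ℝ)/4) +
        (∫ y in (0:ℝ)..1, (z y)^2) ^ ((1:ℝ)/2))) ∧
    2 * ((∫ y in (0:ℝ)..1, (deriv z y)^2) ^ ((1:ℝ)/4) *
        (∫ y in (0:ℝ)..1, (z y)^2) ^ ((1:ℝ)/4) +
        (∫ y in (0:ℝ)..1, (z y)^2) ^ ((1:ℝ)/2)) ≤
      3 * ((∫ y in (0:ℝ)..1, (deriv z y)^2) ^ ((1:ℝ)/2) +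
        (∫ y in (0:ℝ)..1, (z y)^2) ^ ((1:ℝ)/2)) := by
  set A := ∫ y in (0:ℝ)..1, deriv z y ^ 2
  set B := ∫ y in (0:ℝ)..1, z y ^ 2
  have hA : 0 ≤ A := intervalIntegral.integral_nonneg zero_le_one fun y _ => sq_nonneg _
  have hB : 0 ≤ B := intervalIntegral.integral_nonneg zero_le_one fun y _ => sq_nonneg _
  set p := A ^ ((1:ℝ)/4)
  set q := B ^ ((1:ℝ)/4)
  have hp : 0 ≤ p := Real.rpow_nonneg hA _
  have hq : 0 ≤ q := Real.rpow_nonneg hB _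
  have hsqrtA : √A = p ^ 2 := Real.sqrt_eq_sq_rpow_quarter hA
  have hsqrtB : √B = q ^ 2 := Real.sqrt_eq_sq_rpow_quarter hB
  have hBq : B = q ^ 4 := by rw [← Real.sq_sqrt hB, hsqrtB]; ring
  simp only [← Real.sqrt_eq_rpow, hsqrtA, hsqrtB]
  refine ⟨fun x hx => abs_le_of_sq_le_sq ?_ (by positivity), by nlinarith [sq_nonneg (p - q)]⟩
  have h : z x ^ 2 ≤ B + 2 * (√B * √A) := by
    have h := hz.sq_le_interval_average_sq_add_two_mul_sqrt_mul_sqrt zero_lt_one hx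
    rwa [interval_average_eq, sub_zero, inv_one, one_smul] at h
  rw [hsqrtA, hsqrtB, hBq] at h
  nlinarith [mul_nonneg hp hq, pow_nonneg hq 3]
end

section
/- Let r₁, r₂ > 0 and let z : [0,1] → ℝ be twice continuously differentiable with z(0) = 0 and z'(x) ≠ 0 for all x ∈ [0,1]. If ∫₀¹ 1/z'(x)² dx ≤ r₁ and (∫₀¹ (z(x)² + z'(x)² + z''(x)²) dx)^{1/2} ≤ r₂, then |z'(x)| ≥ (r₂/√2) · exp(−r₁ r₂²) for every x ∈ [0,1]. -/
/-!
Put `A = r₂ √r₁`. Since `∫ z''² ≤ r₂²` and `∫ 1/z'² ≤ r₁`, Cauchy–Schwarz gives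
`∫₀¹ |z''/z'| ≤ A`, so `log |z'|` oscillates by at most `A` on `[0,1]`:
`|z'(y)| ≤ e^A |z'(x)|`. Integrating `1/z'(y)² ≥ e^{-2A}/z'(x)²` against `∫ 1/z'² ≤ r₁`
yields `|z'(x)| ≥ e^{-A}/√r₁`, and `t e^{t - t²} ≤ 1` turns this into the bound
`(r₂/√2) e^{-A²}`.
-/

open Set MeasureTheory

lemma two_mul_abs_div_le (a b : ℝ) {c : ℝ} (hc : 0 < c) :
    2 * |a / b| ≤ c * a ^ 2 + c⁻¹ * (1 / b ^ 2) := by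
  have key : c * a ^ 2 + c⁻¹ * (1 / b ^ 2) - 2 * |a / b| = c⁻¹ * (c * |a| - |b|⁻¹) ^ 2 := by
    rw [abs_div, ← sq_abs a, ← sq_abs b]
    field_simp
    ring
  exact sub_nonneg.mp (key ▸ by positivity)

/-- Cauchy–Schwarz, via the weighted AM–GM inequality with weight `β / α`. -/
lemma integral_abs_div_le_mul {f g : ℝ → ℝ} {a b α β : ℝ} (hab : a ≤ b) (hα : 0 < α)
    (hβ : 0 < β) (hf : ContinuousOn f (Icc a b)) (hg : ContinuousOn g (Icc a b))
    (hg0 : ∀ t ∈ Icc a b, g t ≠ 0)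
    (hfα : ∫ t in a..b, f t ^ 2 ≤ α ^ 2) (hgβ : ∫ t in a..b, 1 / g t ^ 2 ≤ β ^ 2) :
    ∫ t in a..b, |f t / g t| ≤ α * β := by
  have hc : 0 < β / α := div_pos hβ hα
  have hf2 : IntervalIntegrable (fun t => β / α * f t ^ 2) volume a b :=
    ((hf.pow 2).intervalIntegrable_of_Icc hab).const_mul _
  have hg2 : IntervalIntegrable (fun t => (β / α)⁻¹ * (1 / g t ^ 2)) volume a b :=
    (ContinuousOn.intervalIntegrable_of_Icc hab
      (continuousOn_const.div (hg.pow 2) fun t ht => pow_ne_zero 2 (hg0 t ht))).const_mul _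
  have hfg : IntervalIntegrable (fun t => 2 * |f t / g t|) volume a b :=
    (((hf.div hg hg0).abs).intervalIntegrable_of_Icc hab).const_mul _
  have := intervalIntegral.integral_mono_on hab hfg (hf2.add hg2)
    fun t _ => two_mul_abs_div_le (f t) (g t) hc
  rw [intervalIntegral.integral_const_mul, intervalIntegral.integral_add hf2 hg2,
    intervalIntegral.integral_const_mul, intervalIntegral.integral_const_mul] at this
  have hbound : β / α * (∫ t in a..b, f t ^ 2) + (β / α)⁻¹ * ∫ t in a..b, 1 / g t ^ 2
      ≤ β / α * α ^ 2 + (β / α)⁻¹ * β ^ 2 := by gcongr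
  have hval : β / α * α ^ 2 + (β / α)⁻¹ * β ^ 2 = 2 * (α * β) := by field_simp; ring
  linarith

/-- `log |u|` has derivative `u' / u`, so it oscillates on `[a, b]` by at most `∫ |u' / u|`. -/
lemma abs_le_exp_integral_mul_abs {u u' : ℝ → ℝ} {a b x y : ℝ}
    (hu : ∀ t ∈ Icc a b, HasDerivAt u (u' t) t) (hu' : ContinuousOn u' (Icc a b))
    (hu0 : ∀ t ∈ Icc a b, u t ≠ 0) (hx : x ∈ Icc a b) (hy : y ∈ Icc a b) :
    |u y| ≤ Real.exp (∫ t in a..b, |u' t / u t|) * |u x| := by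
  have hcont : ContinuousOn u (Icc a b) := fun t ht => (hu t ht).continuousAt.continuousWithinAt
  have hquot : ContinuousOn (fun t => u' t / u t) (Icc a b) := hu'.div hcont hu0
  have hlog : ∀ p ∈ Icc a b, ∀ q ∈ Icc a b, p ≤ q →
      |Real.log (|u q|) - Real.log (|u p|)| ≤ ∫ t in a..b, |u' t / u t| := by
    intro p hp q hq hpq
    have hsub : Icc p q ⊆ Icc a b := Icc_subset_Icc hp.1 hq.2
    have hftc : ∫ t in p..q, u' t / u t = Real.log (u q) - Real.log (u p) := by
      refine intervalIntegral.integral_eq_sub_of_hasDerivAt (f := fun t => Real.log (u t))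
        (fun t ht => ?_) ((hquot.mono hsub).intervalIntegrable_of_Icc hpq)
      rw [uIcc_of_le hpq] at ht
      exact (hu t (hsub ht)).log (hu0 t (hsub ht))
    rw [Real.log_abs, Real.log_abs, ← hftc]
    calc |∫ t in p..q, u' t / u t| ≤ ∫ t in p..q, |u' t / u t| :=
          intervalIntegral.abs_integral_le_integral_abs hpq
      _ ≤ ∫ t in a..b, |u' t / u t| :=
          intervalIntegral.integral_mono_interval hp.1 hpq hq.2
            (Filter.Eventually.of_forall fun t => abs_nonneg _)
            (hquot.abs.intervalIntegrable_of_Icc (hp.1.trans (hpq.trans hq.2)))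
  have hdiff : Real.log |u y| - Real.log |u x| ≤ ∫ t in a..b, |u' t / u t| := by
    rcases le_total x y with hxy | hyx
    · exact (le_abs_self _).trans (hlog x hx y hy hxy)
    · exact (le_abs_self _).trans ((abs_sub_comm _ _).trans_le (hlog y hy x hx hyx))
  have hpos : 0 < |u x| := abs_pos.mpr (hu0 x hx)
  rw [← Real.exp_log (abs_pos.mpr (hu0 y hy)), ← Real.exp_log hpos, ← Real.exp_add]
  exact Real.exp_le_exp.mpr (by linarith)

lemma sub_le_sq_mul_integral_one_div_sq {u : ℝ → ℝ} {a b K x : ℝ} (hab : a ≤ b)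
    (hu : ContinuousOn u (Icc a b)) (hu0 : ∀ t ∈ Icc a b, u t ≠ 0)
    (hK : ∀ y ∈ Icc a b, |u y| ≤ K * |u x|) :
    b - a ≤ (K * u x) ^ 2 * ∫ t in a..b, 1 / u t ^ 2 := by
  have hKx : 0 < K * |u x| := (abs_pos.mpr (hu0 a ⟨le_rfl, hab⟩)).trans_le (hK a ⟨le_rfl, hab⟩)
  have hsq : (K * u x) ^ 2 = (K * |u x|) ^ 2 := by rw [mul_pow, mul_pow, sq_abs]
  have hmono : ∫ _ in a..b, 1 / (K * |u x|) ^ 2 ≤ ∫ t in a..b, 1 / u t ^ 2 := by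
    refine intervalIntegral.integral_mono_on hab intervalIntegrable_const
      (ContinuousOn.intervalIntegrable_of_Icc hab
        (continuousOn_const.div (hu.pow 2) fun t ht => pow_ne_zero 2 (hu0 t ht))) fun t ht => ?_
    rw [← sq_abs (u t)]
    exact one_div_le_one_div_of_le (pow_pos (abs_pos.mpr (hu0 t ht)) 2)
      (pow_le_pow_left₀ (abs_nonneg _) (hK t ht) 2)
  rw [intervalIntegral.integral_const, smul_eq_mul] at hmono
  rw [hsq]
  calc b - a = (K * |u x|) ^ 2 * ((b - a) * (1 / (K * |u x|) ^ 2)) := by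
        rw [mul_one_div, mul_div_cancel₀ _ (pow_pos hKx 2).ne']
    _ ≤ _ := by gcongr

lemma mul_exp_sub_sq_le_one (t : ℝ) : t * Real.exp (t - t ^ 2) ≤ 1 := by
  have h : t ≤ Real.exp (t ^ 2 - t) := by
    nlinarith [Real.add_one_le_exp (t ^ 2 - t), sq_nonneg (t - 1)]
  calc t * Real.exp (t - t ^ 2) ≤ Real.exp (t ^ 2 - t) * Real.exp (t - t ^ 2) := by gcongr
    _ = 1 := by rw [← Real.exp_add, sub_add_sub_cancel', sub_self, Real.exp_zero]

lemma div_sqrt_two_mul_exp_neg_le {r s v : ℝ} (hr : 0 ≤ r) (hs : 0 ≤ s)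
    (h : 1 ≤ (Real.exp (r * s) * v) ^ 2 * s ^ 2) :
    r / Real.sqrt 2 * Real.exp (-(s ^ 2 * r ^ 2)) ≤ |v| := by
  have hlow : 1 ≤ Real.exp (r * s) * |v| * s := by
    rw [← mul_pow, ← sq_abs, abs_mul, abs_mul, abs_of_pos (Real.exp_pos _), abs_of_nonneg hs] at h
    exact (one_le_sq_iff_one_le_abs _).mp h |>.trans_eq (abs_of_nonneg (by positivity))
  calc r / Real.sqrt 2 * Real.exp (-(s ^ 2 * r ^ 2)) ≤ r * Real.exp (-(s ^ 2 * r ^ 2)) := by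
        gcongr; exact div_le_self hr (Real.one_le_sqrt.mpr one_le_two)
    _ ≤ r * Real.exp (-(s ^ 2 * r ^ 2)) * (Real.exp (r * s) * |v| * s) :=
        le_mul_of_one_le_right (by positivity) hlow
    _ = (r * s) * Real.exp (r * s - (r * s) ^ 2) * |v| := by
        rw [Real.exp_sub, Real.exp_neg]; field_simp
    _ ≤ |v| := mul_le_of_le_one_left (abs_nonneg _) (mul_exp_sub_sq_le_one _)

theorem strain_lower_bound_general (r₁ r₂ : ℝ) (hr₁ : 0 < r₁) (hr₂ : 0 < r₂)
    (z : ℝ → ℝ) (hz : ContDiff ℝ 2 z)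
    (hz' : ∀ x ∈ Icc (0:ℝ) 1, deriv z x ≠ 0)
    (h1 : (∫ x in (0:ℝ)..1, 1 / (deriv z x)^2) ≤ r₁)
    (h2 : (∫ x in (0:ℝ)..1, ((z x)^2 + (deriv z x)^2 + (deriv (deriv z) x)^2)) ^ ((1:ℝ)/2)
      ≤ r₂) :
    ∀ x ∈ Icc (0:ℝ) 1, (r₂ / Real.sqrt 2) * Real.exp (-(r₁ * r₂^2)) ≤ |deriv z x| := by
  intro x hx
  have hz1 : ContDiff ℝ 1 (deriv z) := hz.iterate_deriv' 1 1
  have hc1 : Continuous (deriv z) := hz1.continuous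
  have hc2 : Continuous (deriv (deriv z)) := hz1.continuous_deriv le_rfl
  have hz'' : ∫ t in (0:ℝ)..1, deriv (deriv z) t ^ 2 ≤ r₂ ^ 2 := by
    rw [← Real.sqrt_eq_rpow, Real.sqrt_le_iff] at h2
    refine le_trans (intervalIntegral.integral_mono_on zero_le_one ?_ ?_ fun t _ => ?_) h2.2
    · exact (hc2.pow 2).intervalIntegrable 0 1
    · exact (by fun_prop : Continuous _).intervalIntegrable 0 1
    · nlinarith [sq_nonneg (z t), sq_nonneg (deriv z t)]
  have hs : Real.sqrt r₁ ^ 2 = r₁ := Real.sq_sqrt hr₁.le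
  have hA : ∫ t in (0:ℝ)..1, |deriv (deriv z) t / deriv z t| ≤ r₂ * Real.sqrt r₁ :=
    integral_abs_div_le_mul zero_le_one hr₂ (Real.sqrt_pos.mpr hr₁) hc2.continuousOn
      hc1.continuousOn hz' hz'' (hs.symm ▸ h1)
  have hK : ∀ y ∈ Icc (0:ℝ) 1, |deriv z y| ≤ Real.exp (r₂ * Real.sqrt r₁) * |deriv z x| :=
    fun y hy => (abs_le_exp_integral_mul_abs
      (fun t _ => (hz1.differentiable one_ne_zero t).hasDerivAt) hc2.continuousOn hz' hx hy).trans
      (by gcongr)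
  have hlow : 1 ≤ (Real.exp (r₂ * Real.sqrt r₁) * deriv z x) ^ 2 * Real.sqrt r₁ ^ 2 := by
    simpa only [sub_zero, hs] using
      (sub_le_sq_mul_integral_one_div_sq zero_le_one hc1.continuousOn hz' hK).trans
        (mul_le_mul_of_nonneg_left h1 (sq_nonneg _))
  simpa only [hs] using div_sqrt_two_mul_exp_neg_le hr₂.le (Real.sqrt_nonneg r₁) hlow

/-- Key lower-bound lemma (Lemma 3.2): a uniform positive lower bound on the
strain z' under a bound on ∫ 1/z'² and on the W^{2,2}-norm of z. -/
theorem strain_lower_bound (r₁ r₂ : ℝ) (hr₁ : 0 < r₁) (hr₂ : 0 < r₂)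
    (z : ℝ → ℝ) (hz : ContDiff ℝ 2 z) (hz0 : z 0 = 0)
    (hz' : ∀ x ∈ Icc (0:ℝ) 1, deriv z x ≠ 0)
    (h1 : (∫ x in (0:ℝ)..1, 1 / (deriv z x)^2) ≤ r₁)
    (h2 : (∫ x in (0:ℝ)..1, ((z x)^2 + (deriv z x)^2 + (deriv (deriv z) x)^2)) ^ ((1:ℝ)/2)
      ≤ r₂) :
    ∀ x ∈ Icc (0:ℝ) 1, (r₂ / Real.sqrt 2) * Real.exp (-(r₁ * r₂^2)) ≤ |deriv z x| :=
  strain_lower_bound_general r₁ r₂ hr₁ hr₂ z hz hz' h1 h2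
end

section
/- Let r₂ > 0, let u : [0,1] → ℝ be continuous with u(x) ≠ 0 for all x ∈ [0,1], satisfying |u(x) − u(x')| ≤ r₂ |x − x'|^{1/2} for all x, x' ∈ [0,1], and suppose x ↦ 1/u(x)² is integrable on (0,1). Then for every x₀ ∈ [1/2, 1], ∫₀¹ 1/u(x)² dx ≥ (1/(2r₂²)) · log( r₂² / (2 u(x₀)²) ). -/
open Set MeasureTheory

/-!
On `[0, x₀]` the Hölder bound gives `(u x - u x₀)² ≤ r₂² (x₀ - x)`, hence
`u x² ≤ 2 (r₂² (x₀ - x) + u x₀²)`. Integrating the reciprocal of the right-hand side explicitly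
gives `(1 / (2 r₂²)) log ((r₂² x₀ + u x₀²) / u x₀²)`, and `x₀ ≥ 1/2` makes the argument of the
logarithm at least `r₂² / (2 u x₀²)`.
-/

theorem sq_le_of_abs_le_mul_rpow_half {a r d : ℝ} (hd : 0 ≤ d) (h : |a| ≤ r * d ^ (1 / 2 : ℝ)) :
    a ^ 2 ≤ r ^ 2 * d := by
  calc a ^ 2 = |a| ^ 2 := (sq_abs a).symm
    _ ≤ (r * √d) ^ 2 := by
      rw [Real.sqrt_eq_rpow]; exact pow_le_pow_left₀ (abs_nonneg a) h 2
    _ = r ^ 2 * d := by rw [mul_pow, Real.sq_sqrt hd]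

theorem one_div_two_mul_add_sq_le_one_div_sq {a b d : ℝ} (ha : a ≠ 0) (h : (a - b) ^ 2 ≤ d) :
    1 / (2 * (d + b ^ 2)) ≤ 1 / a ^ 2 :=
  one_div_le_one_div_of_le (by positivity) (by nlinarith [sq_nonneg (a - 2 * b)])

theorem integral_one_div_mul_sub_add {k c a b : ℝ} (hk : 0 < k) (hc : 0 < c) (hab : a ≤ b) :
    ∫ x in a..b, 1 / (k * (b - x) + c) = 1 / k * Real.log ((k * (b - a) + c) / c) := by
  have hpos : 0 < k * (b - a) + c := by nlinarith
  rw [intervalIntegral.integral_comp_sub_left (fun t => 1 / (k * t + c)) b,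
    intervalIntegral.integral_comp_mul_add (fun t => 1 / t) hk.ne' c, sub_self, mul_zero, zero_add,
    integral_one_div_of_pos hc hpos, smul_eq_mul, one_div]

theorem mul_log_le_integral_one_div_sq_of_abs_sub_le {u : ℝ → ℝ} {r a b : ℝ} (hr : 0 < r)
    (hab : a ≤ b) (hne : ∀ x ∈ Icc a b, u x ≠ 0)
    (hH : ∀ x ∈ Icc a b, |u x - u b| ≤ r * |x - b| ^ (1 / 2 : ℝ))
    (hint : IntervalIntegrable (fun x => 1 / u x ^ 2) volume a b) :
    1 / (2 * r ^ 2) * Real.log ((r ^ 2 * (b - a) + u b ^ 2) / u b ^ 2) ≤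
      ∫ x in a..b, 1 / u x ^ 2 := by
  have hub : 0 < u b ^ 2 := by have := hne b ⟨hab, le_rfl⟩; positivity
  have hden : ∀ x ∈ Icc a b, 0 < r ^ 2 * (b - x) + u b ^ 2 := fun x hx => by
    have : 0 ≤ r ^ 2 * (b - x) := mul_nonneg (by positivity) (sub_nonneg.2 hx.2)
    linarith
  have hpointwise : ∀ x ∈ Icc a b, 1 / (2 * (r ^ 2 * (b - x) + u b ^ 2)) ≤ 1 / u x ^ 2 :=
    fun x hx => one_div_two_mul_add_sq_le_one_div_sq (hne x hx) <|
      sq_le_of_abs_le_mul_rpow_half (sub_nonneg.2 hx.2) <| by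
        simpa [abs_of_nonpos (sub_nonpos.2 hx.2)] using hH x hx
  have hcont : ContinuousOn (fun x => 1 / (2 * (r ^ 2 * (b - x) + u b ^ 2))) (uIcc a b) := by
    rw [uIcc_of_le hab]
    exact continuousOn_const.div (by fun_prop) fun x hx => by have := hden x hx; positivity
  calc 1 / (2 * r ^ 2) * Real.log ((r ^ 2 * (b - a) + u b ^ 2) / u b ^ 2)
      = ∫ x in a..b, 1 / (2 * (r ^ 2 * (b - x) + u b ^ 2)) := by
        simp_rw [mul_comm (2 : ℝ), ← div_div, intervalIntegral.integral_div]
        rw [integral_one_div_mul_sub_add (by positivity) hub hab]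
        ring
    _ ≤ ∫ x in a..b, 1 / u x ^ 2 :=
        intervalIntegral.integral_mono_on hab hcont.intervalIntegrable hint hpointwise

theorem log_integral_lower_bound_general (r₂ : ℝ) (hr₂ : 0 < r₂) (u : ℝ → ℝ)
    (hne : ∀ x ∈ Icc (0:ℝ) 1, u x ≠ 0)
    (hH : ∀ x ∈ Icc (0:ℝ) 1, ∀ x' ∈ Icc (0:ℝ) 1, |u x - u x'| ≤ r₂ * |x - x'| ^ ((1:ℝ)/2))
    (hint : IntervalIntegrable (fun x => 1 / (u x)^2) MeasureTheory.volume 0 1) :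
    ∀ x₀ ∈ Icc (1/2 : ℝ) 1,
      (1 / (2 * r₂^2)) * Real.log (r₂^2 / (2 * (u x₀)^2)) ≤ ∫ x in (0:ℝ)..1, 1 / (u x)^2 := by
  rintro x₀ ⟨hx₀, hx₀1⟩
  have hx₀0 : 0 ≤ x₀ := by linarith
  have hsub : Icc 0 x₀ ⊆ Icc (0 : ℝ) 1 := Icc_subset_Icc_right hx₀1
  have hux₀ : 0 < u x₀ ^ 2 := by have := hne x₀ ⟨hx₀0, hx₀1⟩; positivity
  calc 1 / (2 * r₂ ^ 2) * Real.log (r₂ ^ 2 / (2 * u x₀ ^ 2))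
      ≤ 1 / (2 * r₂ ^ 2) * Real.log ((r₂ ^ 2 * (x₀ - 0) + u x₀ ^ 2) / u x₀ ^ 2) := by
        rw [← div_div (r₂ ^ 2)]
        gcongr _ * Real.log (?_ / _)
        nlinarith
    _ ≤ ∫ x in 0..x₀, 1 / u x ^ 2 :=
        mul_log_le_integral_one_div_sq_of_abs_sub_le hr₂ hx₀0 (fun x hx => hne x (hsub hx))
          (fun x hx => hH x (hsub hx) x₀ ⟨hx₀0, hx₀1⟩)
          (hint.mono_set (by simpa [uIcc_of_le hx₀0] using hsub))
    _ ≤ ∫ x in 0..1, 1 / u x ^ 2 :=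
        intervalIntegral.integral_mono_interval le_rfl hx₀0 hx₀1
          (ae_of_all _ fun x => by positivity) hint

/-- Intermediate logarithmic integral estimate from the proof of Lemma 3.2:
a Hölder-1/2 continuous function whose reciprocal square has bounded integral
cannot be too small on [1/2, 1]. -/
theorem log_integral_lower_bound (r₂ : ℝ) (hr₂ : 0 < r₂) (u : ℝ → ℝ) (hu : Continuous u)
    (hne : ∀ x ∈ Icc (0:ℝ) 1, u x ≠ 0)
    (hH : ∀ x ∈ Icc (0:ℝ) 1, ∀ x' ∈ Icc (0:ℝ) 1, |u x - u x'| ≤ r₂ * |x - x'| ^ ((1:ℝ)/2))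
    (hint : IntervalIntegrable (fun x => 1 / (u x)^2) MeasureTheory.volume 0 1) :
    ∀ x₀ ∈ Icc (1/2 : ℝ) 1,
      (1 / (2 * r₂^2)) * Real.log (r₂^2 / (2 * (u x₀)^2)) ≤ ∫ x in (0:ℝ)..1, 1 / (u x)^2 :=
  log_integral_lower_bound_general r₂ hr₂ u hne hH hint
end

section
/- Let δ > 0 and let u₁, u₂ : [0,1] → ℝ be continuous with u₁(0) = u₂(0) = 0 and uᵢ(x) − uᵢ(x') ≥ δ(x − x') whenever 0 ≤ x' ≤ x ≤ 1 (i = 1,2). Let y ∈ [0, u₂(1)] and let U₂ ∈ [0,1] satisfy u₂(U₂) = y. Define U₁ ∈ [0,1] by u₁(U₁) = y if y ≤ u₁(1), and U₁ = 1 if y > u₁(1). Then δ |U₁ − U₂| ≤ |u₁(U₂) − u₂(U₂)|. -/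
open Set MeasureTheory

theorem mul_abs_sub_le_abs_sub_of_forall_mul_sub_le {f : ℝ → ℝ} {s : Set ℝ} {δ : ℝ}
    (hf : ∀ x' ∈ s, ∀ x ∈ s, x' ≤ x → δ * (x - x') ≤ f x - f x') {a b : ℝ}
    (ha : a ∈ s) (hb : b ∈ s) : δ * |a - b| ≤ |f a - f b| := by
  rcases le_total b a with hba | hab
  · calc δ * |a - b| = δ * (a - b) := by rw [abs_of_nonneg (sub_nonneg.2 hba)]
      _ ≤ f a - f b := hf b hb a ha hba
      _ ≤ |f a - f b| := le_abs_self _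
  · calc δ * |a - b| = δ * (b - a) := by rw [abs_sub_comm, abs_of_nonneg (sub_nonneg.2 hab)]
      _ ≤ f b - f a := hf a ha b hb hab
      _ ≤ |f a - f b| := by rw [abs_sub_comm]; exact le_abs_self _

theorem inverse_comparison_general (δ : ℝ) (u₁ u₂ : ℝ → ℝ)
    (hmono1 : ∀ x' x : ℝ, 0 ≤ x' → x' ≤ x → x ≤ 1 → δ * (x - x') ≤ u₁ x - u₁ x')
    (y : ℝ)
    (U₂ : ℝ) (hU₂ : U₂ ∈ Icc (0:ℝ) 1) (hU₂y : u₂ U₂ = y)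
    (U₁ : ℝ) (hU₁ : U₁ ∈ Icc (0:ℝ) 1)
    (hU₁le : y ≤ u₁ 1 → u₁ U₁ = y) (hU₁gt : u₁ 1 < y → U₁ = 1) :
    δ * |U₁ - U₂| ≤ |u₁ U₂ - u₂ U₂| := by
  have hu₁ : ∀ x' ∈ Icc (0:ℝ) 1, ∀ x ∈ Icc (0:ℝ) 1, x' ≤ x → δ * (x - x') ≤ u₁ x - u₁ x' :=
    fun x' hx' x hx hle ↦ hmono1 x' x hx'.1 hle hx.2
  rcases le_or_gt y (u₁ 1) with hle | hgt
  · calc δ * |U₁ - U₂| ≤ |u₁ U₁ - u₁ U₂| :=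
          mul_abs_sub_le_abs_sub_of_forall_mul_sub_le hu₁ hU₁ hU₂
      _ = |u₁ U₂ - u₂ U₂| := by rw [hU₁le hle, hU₂y, abs_sub_comm]
  · obtain rfl := hU₁gt hgt
    calc δ * |1 - U₂| = δ * (1 - U₂) := by rw [abs_of_nonneg (sub_nonneg.2 hU₂.2)]
      _ ≤ u₁ 1 - u₁ U₂ := hmono1 U₂ 1 hU₂.1 hU₂.2 le_rfl
      _ ≤ u₂ U₂ - u₁ U₂ := by rw [hU₂y]; linarith
      _ ≤ |u₁ U₂ - u₂ U₂| := by rw [abs_sub_comm]; exact le_abs_self _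

/-- Comparison estimate (inequality (40-2) of Lemma 4.2) for the inverse
functions of two uniformly increasing functions on [0,1], the inverse of u₁
being extended by the constant value 1 beyond u₁(1). -/
theorem inverse_comparison (δ : ℝ) (hδ : 0 < δ) (u₁ u₂ : ℝ → ℝ)
    (hc1 : Continuous u₁) (hc2 : Continuous u₂)
    (h10 : u₁ 0 = 0) (h20 : u₂ 0 = 0)
    (hmono1 : ∀ x' x : ℝ, 0 ≤ x' → x' ≤ x → x ≤ 1 → δ * (x - x') ≤ u₁ x - u₁ x')
    (hmono2 : ∀ x' x : ℝ, 0 ≤ x' → x' ≤ x → x ≤ 1 → δ * (x - x') ≤ u₂ x - u₂ x')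
    (y : ℝ) (hy : y ∈ Icc 0 (u₂ 1))
    (U₂ : ℝ) (hU₂ : U₂ ∈ Icc (0:ℝ) 1) (hU₂y : u₂ U₂ = y)
    (U₁ : ℝ) (hU₁ : U₁ ∈ Icc (0:ℝ) 1)
    (hU₁le : y ≤ u₁ 1 → u₁ U₁ = y) (hU₁gt : u₁ 1 < y → U₁ = 1) :
    δ * |U₁ - U₂| ≤ |u₁ U₂ - u₂ U₂| :=
  inverse_comparison_general δ u₁ u₂ hmono1 y U₂ hU₂ hU₂y U₁ hU₁ hU₁le hU₁gt
end

section
/- Let 0 < δ ≤ M and R > 0. For i = 1,2 let uᵢ : [0,1] → ℝ be continuously differentiable with uᵢ(0) = 0 and δ ≤ uᵢ'(x) ≤ M on [0,1], set sᵢ = uᵢ(1), and let wᵢ : [0,1] → [0,1] satisfy uᵢ(wᵢ(x)) = sᵢ x for all x ∈ [0,1]. Let v₁, v₂ : [0,1] → ℝ be continuously differentiable with sup_{[0,1]} |v₁'| ≤ R, and define v̄ᵢ(x) = vᵢ(wᵢ(x)). Then there exists a constant C₂ > 0 depending only on δ, M, R such that (∫₀¹ (v̄₁(x) − v̄₂(x))²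 dx)^{1/2} ≤ C₂ ( (∫₀¹ (u₁'(x) − u₂'(x))² dx)^{1/2} + (∫₀¹ (v₁(x) − v₂(x))² dx)^{1/2} ). -/
/-!
Since `uᵢ' ≥ δ`, each `uᵢ` stretches distances on `[0, 1]` by a factor at least `δ`, while the
fundamental theorem of calculus and Cauchy–Schwarz give `|u₁ - u₂| ≤ ‖u₁' - u₂'‖₂` pointwise.
Comparing `u₁ (w₁ x) = s₁ x` with `u₂ (w₂ x) = s₂ x` therefore yields
`|w₁ x - w₂ x| ≤ 2 ‖u₁' - u₂'‖₂ / δ`, and since `v₁` is `R`-Lipschitz, `v̄₁ - v̄₂` is within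
`2 R ‖u₁' - u₂'‖₂ / δ` of `(v₁ - v₂) ∘ w₂`. Finally the substitution `x = u₂ y / s₂`, whose
Jacobian `u₂' / s₂` is at most `M / δ`, bounds `‖(v₁ - v₂) ∘ w₂‖₂²` by `(M / δ) ‖v₁ - v₂‖₂²`.
-/

open Set MeasureTheory

theorem sq_integral_unitInterval_le_integral_sq {f : ℝ → ℝ} (hf : Continuous f) :
    (∫ x in (0:ℝ)..1, f x) ^ 2 ≤ ∫ x in (0:ℝ)..1, f x ^ 2 := by
  set t := ∫ x in (0:ℝ)..1, f x
  have hf₁ : IntervalIntegrable f volume 0 1 := hf.intervalIntegrable 0 1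
  have hf₂ : IntervalIntegrable (fun x => f x ^ 2) volume 0 1 := (hf.pow 2).intervalIntegrable 0 1
  have hvar : ∫ x in (0:ℝ)..1, (f x - t) ^ 2 = (∫ x in (0:ℝ)..1, f x ^ 2) - t ^ 2 := by
    simp_rw [sub_sq]
    have hlin : IntervalIntegrable (fun x => 2 * f x * t) volume 0 1 :=
      (hf₁.const_mul 2).mul_const t
    rw [intervalIntegral.integral_add (hf₂.sub hlin) intervalIntegrable_const,
      intervalIntegral.integral_sub hf₂ hlin]
    simp only [intervalIntegral.integral_mul_const, intervalIntegral.integral_const_mul,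
      intervalIntegral.integral_const, sub_zero, one_smul]
    ring
  have : 0 ≤ ∫ x in (0:ℝ)..1, (f x - t) ^ 2 :=
    intervalIntegral.integral_nonneg zero_le_one fun x _ => sq_nonneg _
  linarith

theorem abs_sub_le_integral_abs_of_hasDerivAt {f f' : ℝ → ℝ} {a b y : ℝ}
    (hf : ∀ x ∈ Icc a b, HasDerivAt f (f' x) x) (hf' : IntervalIntegrable f' volume a b)
    (hy : y ∈ Icc a b) : |f y - f a| ≤ ∫ x in a..b, |f' x| := by
  have hsub : uIcc a y ⊆ Icc a b := by
    rw [uIcc_of_le hy.1]; exact Icc_subset_Icc_right hy.2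
  rw [← intervalIntegral.integral_eq_sub_of_hasDerivAt (fun x hx => hf x (hsub hx))
    (hf'.mono_set (by rwa [uIcc_of_le (hy.1.trans hy.2)]))]
  calc |∫ x in a..y, f' x| ≤ ∫ x in a..y, |f' x| :=
        intervalIntegral.abs_integral_le_integral_abs hy.1
    _ ≤ ∫ x in a..b, |f' x| := intervalIntegral.integral_mono_interval le_rfl hy.1 hy.2
        (Filter.Eventually.of_forall fun x => abs_nonneg _) hf'.abs

theorem abs_sub_le_sqrt_integral_sq_deriv_sub {u₁ u₂ : ℝ → ℝ} (hu₁ : ContDiff ℝ 1 u₁)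
    (hu₂ : ContDiff ℝ 1 u₂) (h0 : u₁ 0 = u₂ 0) {y : ℝ} (hy : y ∈ Icc (0:ℝ) 1) :
    |u₁ y - u₂ y| ≤ √(∫ x in (0:ℝ)..1, (deriv u₁ x - deriv u₂ x) ^ 2) := by
  have hcd : Continuous fun x => deriv u₁ x - deriv u₂ x :=
    (hu₁.continuous_deriv le_rfl).sub (hu₂.continuous_deriv le_rfl)
  have hFTC := abs_sub_le_integral_abs_of_hasDerivAt (f := u₁ - u₂)
    (fun x _ => (hu₁.differentiable one_ne_zero x).hasDerivAt.sub
      (hu₂.differentiable one_ne_zero x).hasDerivAt) (hcd.intervalIntegrable 0 1) hy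
  simp only [Pi.sub_apply, h0, sub_self, sub_zero] at hFTC
  refine hFTC.trans (Real.le_sqrt_of_sq_le ?_)
  simpa only [sq_abs] using sq_integral_unitInterval_le_integral_sq hcd.abs

theorem mul_abs_sub_le_abs_sub_of_le_deriv {D : Set ℝ} (hD : Convex ℝ D) {u : ℝ → ℝ} {δ : ℝ}
    (hu : Differentiable ℝ u) (hδ : ∀ x ∈ D, δ ≤ deriv u x) :
    ∀ x ∈ D, ∀ y ∈ D, δ * |x - y| ≤ |u x - u y| := by
  have key := hD.mul_sub_le_image_sub_of_le_deriv hu.continuous.continuousOn hu.differentiableOn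
    fun z hz => hδ z (interior_subset hz)
  intro x hx y hy
  rcases le_total x y with hxy | hyx
  · rw [abs_sub_comm x, abs_sub_comm (u x), abs_of_nonneg (sub_nonneg.2 hxy)]
    exact (key x hx y hy hxy).trans (le_abs_self _)
  · rw [abs_of_nonneg (sub_nonneg.2 hyx)]
    exact (key y hy x hx hyx).trans (le_abs_self _)

section Reparametrization

variable {δ s : ℝ} {u w : ℝ → ℝ}

theorem lipschitzOnWith_of_comp_eq_mul (hδ : 0 < δ)
    (hE : ∀ a ∈ Icc (0:ℝ) 1, ∀ b ∈ Icc (0:ℝ) 1, δ * |a - b| ≤ |u a - u b|)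
    (hw : ∀ x ∈ Icc (0:ℝ) 1, w x ∈ Icc (0:ℝ) 1) (hwu : ∀ x ∈ Icc (0:ℝ) 1, u (w x) = s * x) :
    LipschitzOnWith (Real.toNNReal (|s| / δ)) w (Icc 0 1) := by
  refine LipschitzOnWith.of_dist_le_mul fun x hx y hy => ?_
  rw [Real.dist_eq, Real.dist_eq, Real.coe_toNNReal _ (by positivity), div_mul_eq_mul_div,
    le_div_iff₀ hδ, mul_comm]
  calc δ * |w x - w y| ≤ |u (w x) - u (w y)| := hE _ (hw x hx) _ (hw y hy)
    _ = |s| * |x - y| := by rw [hwu x hx, hwu y hy, ← mul_sub, abs_mul]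

theorem comp_div_apply_one_eq (hu : InjOn u (Icc 0 1)) (hu1 : u 1 ≠ 0)
    (hw : ∀ x ∈ Icc (0:ℝ) 1, w x ∈ Icc (0:ℝ) 1) (hwu : ∀ x ∈ Icc (0:ℝ) 1, u (w x) = u 1 * x)
    {y : ℝ} (hy : y ∈ Icc (0:ℝ) 1) (hy' : u y / u 1 ∈ Icc (0:ℝ) 1) : w (u y / u 1) = y :=
  hu (hw _ hy') hy (by rw [hwu _ hy', mul_div_cancel₀ _ hu1])

theorem div_apply_one_mem_Icc (hu : MonotoneOn u (Icc 0 1)) (hu0 : u 0 = 0) {y : ℝ}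
    (hy : y ∈ Icc (0:ℝ) 1) : u y / u 1 ∈ Icc (0:ℝ) 1 := by
  have h0 : 0 ≤ u y := hu0 ▸ hu ⟨le_rfl, zero_le_one⟩ hy hy.1
  have h1 : u y ≤ u 1 := hu hy ⟨zero_le_one, le_rfl⟩ hy.2
  exact ⟨div_nonneg h0 (h0.trans h1), div_le_one_of_le₀ h1 (h0.trans h1)⟩

variable {M : ℝ}

theorem integral_comp_le_of_comp_eq_mul (hδ : 0 < δ) (hu : ContDiff ℝ 1 u) (hu0 : u 0 = 0)
    (hud : ∀ x ∈ Icc (0:ℝ) 1, deriv u x ∈ Icc δ M)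
    (hw : ∀ x ∈ Icc (0:ℝ) 1, w x ∈ Icc (0:ℝ) 1) (hwu : ∀ x ∈ Icc (0:ℝ) 1, u (w x) = u 1 * x)
    {g : ℝ → ℝ} (hg : Continuous g) (hg0 : ∀ y, 0 ≤ g y) :
    ∫ x in (0:ℝ)..1, g (w x) ≤ M / δ * ∫ y in (0:ℝ)..1, g y := by
  have hdiff : Differentiable ℝ u := hu.differentiable one_ne_zero
  have hmono : StrictMonoOn u (Icc 0 1) := strictMonoOn_of_deriv_pos (convex_Icc 0 1)
    hdiff.continuous.continuousOn fun x hx => hδ.trans_le (hud x (interior_subset hx)).1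
  have hs : δ ≤ u 1 := by
    simpa [hu0] using (convex_Icc (0:ℝ) 1).mul_sub_le_image_sub_of_le_deriv
      hdiff.continuous.continuousOn hdiff.differentiableOn
      (fun x hx => (hud x (interior_subset hx)).1) 0 (left_mem_Icc.2 zero_le_one) 1
      (right_mem_Icc.2 zero_le_one) zero_le_one
  have hs0 : 0 < u 1 := hδ.trans_le hs
  have hcov := intervalIntegral.integral_comp_mul_deriv_of_deriv_nonneg (g := g ∘ w)
    (f := fun y => u y / u 1) (f' := fun y => deriv u y / u 1) (a := 0) (b := 1)
    (hdiff.continuous.div_const _).continuousOn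
    (fun y _ => (hdiff y).hasDerivAt.div_const _)
    fun y hy => div_nonneg (hδ.le.trans (hud y (Ioo_subset_Icc_self (by simpa using hy))).1)
      hs0.le
  simp only [hu0, zero_div, div_self hs0.ne', Function.comp_apply] at hcov
  have hint : IntervalIntegrable g volume 0 1 := hg.intervalIntegrable 0 1
  calc ∫ x in (0:ℝ)..1, g (w x) = ∫ y in (0:ℝ)..1, g y * (deriv u y / u 1) := by
        rw [← hcov]
        refine intervalIntegral.integral_congr fun y hy => ?_
        rw [uIcc_of_le zero_le_one] at hy
        simp only [comp_div_apply_one_eq hmono.injOn hs0.ne' hw hwu hy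
          (div_apply_one_mem_Icc hmono.monotoneOn hu0 hy)]
    _ ≤ ∫ y in (0:ℝ)..1, M / δ * g y := by
        refine intervalIntegral.integral_mono_on zero_le_one
          (hint.mul_continuousOn ((hu.continuous_deriv le_rfl).div_const _).continuousOn)
          (hint.const_mul _) fun y hy => ?_
        have hderiv := hud y hy
        rw [mul_comm]
        refine mul_le_mul_of_nonneg_right ?_ (hg0 y)
        calc deriv u y / u 1 ≤ deriv u y / δ :=
              div_le_div_of_nonneg_left (hδ.le.trans hderiv.1) hδ hs
          _ ≤ M / δ := div_le_div_of_nonneg_right hderiv.2 hδ.le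
    _ = M / δ * ∫ y in (0:ℝ)..1, g y := intervalIntegral.integral_const_mul _ _

end Reparametrization

theorem mul_abs_sub_le_of_comp_eq_mul {δ S x : ℝ} {u₁ u₂ w₁ w₂ : ℝ → ℝ}
    (hE : ∀ a ∈ Icc (0:ℝ) 1, ∀ b ∈ Icc (0:ℝ) 1, δ * |a - b| ≤ |u₁ a - u₁ b|)
    (hS : ∀ y ∈ Icc (0:ℝ) 1, |u₁ y - u₂ y| ≤ S) (hx : x ∈ Icc (0:ℝ) 1)
    (hw₁ : w₁ x ∈ Icc (0:ℝ) 1) (hw₂ : w₂ x ∈ Icc (0:ℝ) 1)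
    (hwu₁ : u₁ (w₁ x) = u₁ 1 * x) (hwu₂ : u₂ (w₂ x) = u₂ 1 * x) :
    δ * |w₁ x - w₂ x| ≤ 2 * S := by
  have hx1 : |x| ≤ 1 := abs_le.2 ⟨by linarith [hx.1], hx.2⟩
  have hS1 := hS 1 (right_mem_Icc.2 zero_le_one)
  calc δ * |w₁ x - w₂ x| ≤ |u₁ (w₁ x) - u₁ (w₂ x)| := hE _ hw₁ _ hw₂
    _ = |(u₁ 1 - u₂ 1) * x + (u₂ (w₂ x) - u₁ (w₂ x))| := by rw [hwu₁, hwu₂]; ring_nf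
    _ ≤ |u₁ 1 - u₂ 1| * |x| + |u₁ (w₂ x) - u₂ (w₂ x)| := by
        rw [← abs_mul, abs_sub_comm (u₁ _)]; exact abs_add_le _ _
    _ ≤ S * 1 + S :=
        add_le_add (mul_le_mul hS1 hx1 (abs_nonneg x) ((abs_nonneg _).trans hS1)) (hS _ hw₂)
    _ = 2 * S := by ring

theorem abs_comp_sub_comp_le_of_comp_eq_mul {δ R x : ℝ} {u₁ u₂ v w₁ w₂ : ℝ → ℝ} (hδ : 0 < δ)
    (hR : 0 ≤ R) (hu₁ : ContDiff ℝ 1 u₁) (hu₂ : ContDiff ℝ 1 u₂) (h0 : u₁ 0 = u₂ 0)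
    (hE : ∀ a ∈ Icc (0:ℝ) 1, ∀ b ∈ Icc (0:ℝ) 1, δ * |a - b| ≤ |u₁ a - u₁ b|)
    (hv : Differentiable ℝ v) (hvR : ∀ y ∈ Icc (0:ℝ) 1, |deriv v y| ≤ R) (hx : x ∈ Icc (0:ℝ) 1)
    (hw₁ : w₁ x ∈ Icc (0:ℝ) 1) (hw₂ : w₂ x ∈ Icc (0:ℝ) 1)
    (hwu₁ : u₁ (w₁ x) = u₁ 1 * x) (hwu₂ : u₂ (w₂ x) = u₂ 1 * x) :
    |v (w₁ x) - v (w₂ x)| ≤ 2 * R / δ * √(∫ y in (0:ℝ)..1, (deriv u₁ y - deriv u₂ y) ^ 2) := by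
  set A := √(∫ y in (0:ℝ)..1, (deriv u₁ y - deriv u₂ y) ^ 2)
  have hw : δ * |w₁ x - w₂ x| ≤ 2 * A := mul_abs_sub_le_of_comp_eq_mul hE
    (fun y hy => abs_sub_le_sqrt_integral_sq_deriv_sub hu₁ hu₂ h0 hy) hx hw₁ hw₂ hwu₁ hwu₂
  calc |v (w₁ x) - v (w₂ x)| ≤ R * |w₁ x - w₂ x| :=
        (convex_Icc 0 1).norm_image_sub_le_of_norm_deriv_le (fun y _ => hv y) hvR hw₂ hw₁
    _ ≤ R * (2 * A / δ) := by gcongr; rwa [le_div_iff₀' hδ]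
    _ = 2 * R / δ * A := by ring

theorem sq_sub_le_of_abs_sub_le {a b c ε : ℝ} (h : |a - b| ≤ ε) :
    (a - c) ^ 2 ≤ 2 * ε ^ 2 + 2 * (b - c) ^ 2 := by
  have : (a - b) ^ 2 ≤ ε ^ 2 := sq_le_sq' (abs_le.1 h).1 (abs_le.1 h).2
  nlinarith [sq_nonneg (a - b - (b - c))]

theorem integral_sq_sub_comp_le {v₁ v₂ w₁ w₂ : ℝ → ℝ} {ε : ℝ} (hv₁ : Continuous v₁)
    (hv₂ : Continuous v₂) (hw₁ : ContinuousOn w₁ (Icc 0 1)) (hw₂ : ContinuousOn w₂ (Icc 0 1))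
    (hε : ∀ x ∈ Icc (0:ℝ) 1, |v₁ (w₁ x) - v₁ (w₂ x)| ≤ ε) :
    ∫ x in (0:ℝ)..1, (v₁ (w₁ x) - v₂ (w₂ x)) ^ 2 ≤
      2 * ε ^ 2 + 2 * ∫ x in (0:ℝ)..1, (v₁ (w₂ x) - v₂ (w₂ x)) ^ 2 := by
  have hint : IntervalIntegrable (fun x => (v₁ (w₂ x) - v₂ (w₂ x)) ^ 2) volume 0 1 :=
    ContinuousOn.intervalIntegrable_of_Icc zero_le_one
      (((hv₁.comp_continuousOn hw₂).sub (hv₂.comp_continuousOn hw₂)).pow 2)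
  calc ∫ x in (0:ℝ)..1, (v₁ (w₁ x) - v₂ (w₂ x)) ^ 2
      ≤ ∫ x in (0:ℝ)..1, (2 * ε ^ 2 + 2 * (v₁ (w₂ x) - v₂ (w₂ x)) ^ 2) :=
        intervalIntegral.integral_mono_on zero_le_one
          (ContinuousOn.intervalIntegrable_of_Icc zero_le_one
            (((hv₁.comp_continuousOn hw₁).sub (hv₂.comp_continuousOn hw₂)).pow 2))
          (intervalIntegrable_const.add (hint.const_mul 2))
          fun x hx => sq_sub_le_of_abs_sub_le (hε x hx)
    _ = 2 * ε ^ 2 + 2 * ∫ x in (0:ℝ)..1, (v₁ (w₂ x) - v₂ (w₂ x)) ^ 2 := by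
        rw [intervalIntegral.integral_add intervalIntegrable_const (hint.const_mul 2),
          intervalIntegral.integral_const, intervalIntegral.integral_const_mul, sub_zero, one_smul]

theorem sqrt_le_two_mul_add_mul_add_of_le {I a b x y : ℝ} (ha : 0 ≤ a) (hb : 0 ≤ b)
    (hx : 0 ≤ x) (hy : 0 ≤ y) (h : I ≤ 2 * (a * x) ^ 2 + 2 * (b * y) ^ 2) :
    √I ≤ 2 * (a + b) * (x + y) := by
  have hax : a * x ≤ (a + b) * (x + y) := by nlinarith [mul_nonneg ha hy, mul_nonneg hb hx]
  have hby : b * y ≤ (a + b) * (x + y) := by nlinarith [mul_nonneg ha hy, mul_nonneg hb hx]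
  rw [Real.sqrt_le_left (by positivity)]
  nlinarith [pow_le_pow_left₀ (by positivity) hax 2, pow_le_pow_left₀ (by positivity) hby 2]

/-- Time-frozen classical form of Lemma 4.2: the pulled-back velocities
v̄ᵢ(x) = vᵢ(uᵢ⁻¹(sᵢ x)) differ in L²(0,1) by at most a constant (depending only
on δ, M, R) times the L² distance of the strains plus that of the velocities. -/
theorem pulled_back_velocity_estimate (δ M R : ℝ) (hδ : 0 < δ) (hδM : δ ≤ M) (hR : 0 < R) :
    ∃ C₂ > 0, ∀ (u₁ u₂ v₁ v₂ w₁ w₂ : ℝ → ℝ),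
      ContDiff ℝ 1 u₁ → ContDiff ℝ 1 u₂ →
      u₁ 0 = 0 → u₂ 0 = 0 →
      (∀ x ∈ Icc (0:ℝ) 1, deriv u₁ x ∈ Icc δ M) →
      (∀ x ∈ Icc (0:ℝ) 1, deriv u₂ x ∈ Icc δ M) →
      (∀ x ∈ Icc (0:ℝ) 1, w₁ x ∈ Icc (0:ℝ) 1) →
      (∀ x ∈ Icc (0:ℝ) 1, w₂ x ∈ Icc (0:ℝ) 1) →
      (∀ x ∈ Icc (0:ℝ) 1, u₁ (w₁ x) = u₁ 1 * x) →
      (∀ x ∈ Icc (0:ℝ) 1, u₂ (w₂ x) = u₂ 1 * x) →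
      ContDiff ℝ 1 v₁ → ContDiff ℝ 1 v₂ →
      (∀ x ∈ Icc (0:ℝ) 1, |deriv v₁ x| ≤ R) →
      (∫ x in (0:ℝ)..1, (v₁ (w₁ x) - v₂ (w₂ x))^2) ^ ((1:ℝ)/2) ≤
        C₂ * ((∫ x in (0:ℝ)..1, (deriv u₁ x - deriv u₂ x)^2) ^ ((1:ℝ)/2) +
          (∫ x in (0:ℝ)..1, (v₁ x - v₂ x)^2) ^ ((1:ℝ)/2)) := by
  refine ⟨2 * (2 * R / δ + √(M / δ)), by positivity, ?_⟩
  intro u₁ u₂ v₁ v₂ w₁ w₂ hu₁ hu₂ hu₁0 hu₂0 hud₁ hud₂ hw₁ hw₂ hwu₁ hwu₂ hv₁ hv₂ hv₁R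
  simp only [← Real.sqrt_eq_rpow]
  set A := √(∫ x in (0:ℝ)..1, (deriv u₁ x - deriv u₂ x) ^ 2)
  set B := √(∫ x in (0:ℝ)..1, (v₁ x - v₂ x) ^ 2)
  have hE₁ := mul_abs_sub_le_abs_sub_of_le_deriv (convex_Icc 0 1)
    (hu₁.differentiable one_ne_zero) fun x hx => (hud₁ x hx).1
  have hE₂ := mul_abs_sub_le_abs_sub_of_le_deriv (convex_Icc 0 1)
    (hu₂.differentiable one_ne_zero) fun x hx => (hud₂ x hx).1
  have hε : ∀ x ∈ Icc (0:ℝ) 1, |v₁ (w₁ x) - v₁ (w₂ x)| ≤ 2 * R / δ * A := fun x hx =>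
    abs_comp_sub_comp_le_of_comp_eq_mul hδ hR.le hu₁ hu₂ (hu₁0.trans hu₂0.symm) hE₁
      (hv₁.differentiable one_ne_zero) hv₁R hx (hw₁ x hx) (hw₂ x hx) (hwu₁ x hx) (hwu₂ x hx)
  have hI : ∫ x in (0:ℝ)..1, (v₁ (w₁ x) - v₂ (w₂ x)) ^ 2 ≤
      2 * (2 * R / δ * A) ^ 2 + 2 * (√(M / δ) * B) ^ 2 := calc
    _ ≤ 2 * (2 * R / δ * A) ^ 2 + 2 * ∫ x in (0:ℝ)..1, (v₁ (w₂ x) - v₂ (w₂ x)) ^ 2 :=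
      integral_sq_sub_comp_le hv₁.continuous hv₂.continuous
        (lipschitzOnWith_of_comp_eq_mul hδ hE₁ hw₁ hwu₁).continuousOn
        (lipschitzOnWith_of_comp_eq_mul hδ hE₂ hw₂ hwu₂).continuousOn hε
    _ ≤ 2 * (2 * R / δ * A) ^ 2 + 2 * (M / δ * ∫ x in (0:ℝ)..1, (v₁ x - v₂ x) ^ 2) := by
      gcongr
      exact integral_comp_le_of_comp_eq_mul hδ hu₂ hu₂0 hud₂ hw₂ hwu₂
        ((hv₁.continuous.sub hv₂.continuous).pow 2) fun y => sq_nonneg _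
    _ = 2 * (2 * R / δ * A) ^ 2 + 2 * (√(M / δ) * B) ^ 2 := by
      rw [mul_pow √(M / δ), Real.sq_sqrt (div_nonneg (hδ.le.trans hδM) hδ.le),
        Real.sq_sqrt (intervalIntegral.integral_nonneg zero_le_one fun x _ => sq_nonneg _)]
  exact sqrt_le_two_mul_add_mul_add_of_le (by positivity) (by positivity) (by positivity)
    (by positivity) hI
end

section
/- Let m, γ, k, k_v > 0, T > 0, and let f(r) = (k/2)(r − 1/2 − 1/(2r³)) for r > 0. Let u : [0,T] × [0,1] → ℝ be smooth (all derivatives appearing below continuous on the closed rectangle) with u_x(t,x) > 0 on [0,T] × [0,1], let g : [0,T] × [0,1] → ℝ be continuously differentiable and q : [0,T] → ℝ continuous, and suppose: m u_tt + γ u_xxxx − ∂_x( f(u_x) + k_v u_tx ) = ∂_x g on (0,T) × (0,1); u(t,0) = 0, u_xx(t,0) = u_xx(t,1) = 0 for t ∈ [0,T]; and −γ u_xxx(t,1) + f(u_x(t,1)) + k_v u_tx(t,1) + g(t,1) = q(t) for t ∈ [0,T]. Then for all t ∈ [0,T]: (m/2)∫₀¹ u_t(t)² dx + (γ/2)∫₀¹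 u_xx(t)² dx + (k/8)( ∫₀¹ u_x(t)² dx + ∫₀¹ 1/u_x(t)² dx ) + (k_v/2)∫₀ᵗ∫₀¹ u_tx² dx dτ ≤ (m/2)∫₀¹ u_t(0)² dx + (γ/2)∫₀¹ u_xx(0)² dx + (k/4)( ∫₀¹ u_x(0)² dx + (1/2)∫₀¹ 1/u_x(0)² dx + 1/2 ) + (1/k_v) ∫₀ᵗ ( ∫₀¹ g(τ,x)² dx + q(τ)² ) dτ. -/
open Set MeasureTheory Function

noncomputable section BeamAux

/-- Directional partial derivative field of a two-variable function. -/
def pd (v : ℝ × ℝ) (w : ℝ → ℝ → ℝ) : ℝ → ℝ → ℝ :=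
  fun t x => fderiv ℝ (uncurry w) (t, x) v

lemma contDiff_pd {w : ℝ → ℝ → ℝ} (hw : ContDiff ℝ (⊤ : ℕ∞) (uncurry w)) (v : ℝ × ℝ) :
    ContDiff ℝ (⊤ : ℕ∞) (uncurry (pd v w)) := by
  have h1 : ContDiff ℝ (⊤ : ℕ∞) (fderiv ℝ (uncurry w)) := hw.fderiv_right (by simp)
  exact h1.clm_apply contDiff_const

lemma hasDerivAt_slice2' {w : ℝ → ℝ → ℝ} {L : ℝ × ℝ →L[ℝ] ℝ} {t x : ℝ}
    (h : HasFDerivAt (uncurry w) L (t, x)) :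
    HasDerivAt (w t) (L (0, 1)) x := by
  have hline : HasDerivAt (fun ξ : ℝ => ((t, ξ) : ℝ × ℝ)) ((0 : ℝ), (1 : ℝ)) x :=
    (hasDerivAt_const x t).prodMk (hasDerivAt_id x)
  exact h.comp_hasDerivAt x hline

lemma hasDerivAt_slice1' {w : ℝ → ℝ → ℝ} {L : ℝ × ℝ →L[ℝ] ℝ} {t x : ℝ}
    (h : HasFDerivAt (uncurry w) L (t, x)) :
    HasDerivAt (fun τ => w τ x) (L (1, 0)) t := by
  have hline : HasDerivAt (fun τ : ℝ => ((τ, x) : ℝ × ℝ)) ((1 : ℝ), (0 : ℝ)) t :=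
    (hasDerivAt_id t).prodMk (hasDerivAt_const t x)
  exact h.comp_hasDerivAt t hline

lemma hasDerivAt_slice2 {w : ℝ → ℝ → ℝ} (hw : ContDiff ℝ (⊤ : ℕ∞) (uncurry w)) (t x : ℝ) :
    HasDerivAt (w t) (pd (0, 1) w t x) x :=
  hasDerivAt_slice2' (hw.differentiable (by simp) (t, x)).hasFDerivAt

lemma hasDerivAt_slice1 {w : ℝ → ℝ → ℝ} (hw : ContDiff ℝ (⊤ : ℕ∞) (uncurry w)) (t x : ℝ) :
    HasDerivAt (fun τ => w τ x) (pd (1, 0) w t x) t :=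
  hasDerivAt_slice1' (hw.differentiable (by simp) (t, x)).hasFDerivAt

lemma deriv_slice2 {w : ℝ → ℝ → ℝ} (hw : ContDiff ℝ (⊤ : ℕ∞) (uncurry w)) (t : ℝ) :
    deriv (w t) = pd (0, 1) w t :=
  funext fun x => (hasDerivAt_slice2 hw t x).deriv

lemma deriv_slice1 {w : ℝ → ℝ → ℝ} (hw : ContDiff ℝ (⊤ : ℕ∞) (uncurry w)) (t x : ℝ) :
    deriv (fun τ => w τ x) t = pd (1, 0) w t x :=
  (hasDerivAt_slice1 hw t x).deriv

lemma pd_comm {w : ℝ → ℝ → ℝ} (hw : ContDiff ℝ (⊤ : ℕ∞) (uncurry w)) (a b : ℝ × ℝ) (t x : ℝ) :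
    pd a (pd b w) t x = pd b (pd a w) t x := by
  have hD : ContDiff ℝ (⊤ : ℕ∞) (fderiv ℝ (uncurry w)) := hw.fderiv_right (by simp)
  set D2 := fderiv ℝ (fderiv ℝ (uncurry w)) (t, x) with hD2
  have hx : HasFDerivAt (fderiv ℝ (uncurry w)) D2 (t, x) :=
    (hD.differentiable (by simp) (t, x)).hasFDerivAt
  have hsymm : ∀ v w', D2 v w' = D2 w' v :=
    second_derivative_symmetric (fun y => (hw.differentiable (by simp) y).hasFDerivAt) hx
  have key : ∀ c : ℝ × ℝ, ∀ e : ℝ × ℝ,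
      fderiv ℝ (uncurry (pd c w)) (t, x) e = D2 e c := by
    intro c e
    have h1 : HasFDerivAt (fun p : ℝ × ℝ => fderiv ℝ (uncurry w) p c)
        ((D2.flip) c) (t, x) := by
      have := hx.clm_apply (hasFDerivAt_const c ((t, x) : ℝ × ℝ))
      simpa using this
    have h2 : uncurry (pd c w) = fun p : ℝ × ℝ => fderiv ℝ (uncurry w) p c := rfl
    rw [h2, h1.fderiv]
    rfl
  show fderiv ℝ (uncurry (pd b w)) (t, x) a = fderiv ℝ (uncurry (pd a w)) (t, x) b
  rw [key b a, key a b, hsymm]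

end BeamAux

noncomputable section BeamAux2

/-- The singular elastic response function. -/
def fk (k r : ℝ) : ℝ := k / 2 * (r - 1 / 2 - 1 / (2 * r ^ 3))

/-- Primitive of `fk`. -/
def Fk (k r : ℝ) : ℝ := k / 4 * (r ^ 2 - r + 1 / (2 * r ^ 2))

lemma hasDerivAt_inv_pow {n : ℕ} {r : ℝ} (hr : r ≠ 0) :
    HasDerivAt (fun s : ℝ => 1 / (2 * s ^ n)) (-(n : ℝ) / (2 * r ^ (n + 1))) r := by
  have h1 : HasDerivAt (fun s : ℝ => 2 * s ^ n) (2 * ((n : ℝ) * r ^ (n - 1))) r :=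
    (hasDerivAt_pow n r).const_mul 2
  have h2 := (hasDerivAt_const r (1 : ℝ)).div h1 (by positivity)
  refine h2.congr_deriv ?_
  rcases n with - | n
  · simp
  · simp only [Nat.add_sub_cancel]
    field_simp
    ring

lemma hasDerivAt_fk {k r : ℝ} (hr : r ≠ 0) :
    HasDerivAt (fk k) (k / 2 * (1 + 3 / (2 * r ^ 4))) r := by
  have h1 : HasDerivAt (fun s : ℝ => s - 1 / 2 - 1 / (2 * s ^ 3))
      (1 - (-(3 : ℝ) / (2 * r ^ 4))) r :=
    ((hasDerivAt_id r).sub_const _).sub (hasDerivAt_inv_pow hr)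
  have := h1.const_mul (k / 2)
  refine this.congr_deriv ?_
  push_cast; ring

lemma hasDerivAt_Fk {k r : ℝ} (hr : r ≠ 0) :
    HasDerivAt (Fk k) (fk k r) r := by
  have h1 : HasDerivAt (fun s : ℝ => s ^ 2 - s + 1 / (2 * s ^ 2))
      (2 * r - 1 + (-(2 : ℝ) / (2 * r ^ 3))) r := by
    have := ((hasDerivAt_pow 2 r).sub (hasDerivAt_id r)).add (hasDerivAt_inv_pow (n := 2) hr)
    refine this.congr_deriv ?_
    push_cast; ring
  have := h1.const_mul (k / 4)
  refine this.congr_deriv ?_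
  unfold fk
  field_simp
  ring

lemma continuousAt_fk {k r : ℝ} (hr : r ≠ 0) : ContinuousAt (fk k) r :=
  (hasDerivAt_fk hr).continuousAt

lemma continuousAt_Fk {k r : ℝ} (hr : r ≠ 0) : ContinuousAt (Fk k) r :=
  (hasDerivAt_Fk hr).continuousAt

lemma Fk_lower {k r : ℝ} (hk : 0 < k) (hr : 0 < r) :
    k / 8 * (r ^ 2 + 1 / r ^ 2) ≤ Fk k r + k / 8 := by
  have h : Fk k r + k / 8 - k / 8 * (r ^ 2 + 1 / r ^ 2) = k / 8 * (r - 1) ^ 2 := by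
    unfold Fk; field_simp; ring
  nlinarith [mul_nonneg hk.le (sq_nonneg (r - 1))]

lemma Fk_upper {k r : ℝ} (hk : 0 < k) (hr : 0 < r) :
    Fk k r ≤ k / 4 * (r ^ 2 + 1 / 2 * (1 / r ^ 2)) := by
  unfold Fk
  have : 1 / (2 * r ^ 2) = 1 / 2 * (1 / r ^ 2) := by ring
  nlinarith

end BeamAux2

lemma continuousOn_slice2 {f : ℝ × ℝ → ℝ} {s₁ s₂ : Set ℝ} (h : ContinuousOn f (s₁ ×ˢ s₂))
    {a : ℝ} (ha : a ∈ s₁) : ContinuousOn (fun y => f (a, y)) s₂ :=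
  h.comp ((continuous_const.prodMk continuous_id).continuousOn) fun _ hy => ⟨ha, hy⟩

lemma continuousOn_slice1 {f : ℝ × ℝ → ℝ} {s₁ s₂ : Set ℝ} (h : ContinuousOn f (s₁ ×ˢ s₂))
    {b : ℝ} (hb : b ∈ s₂) : ContinuousOn (fun a => f (a, b)) s₁ :=
  h.comp ((continuous_id.prodMk continuous_const).continuousOn) fun _ hy => ⟨hy, hb⟩

section Main
open Set MeasureTheory

set_option maxHeartbeats 1000000 in
/-- A priori energy estimate (inequality (u-ineq) of Lemma 5.5, classical
form) for the viscoelastic beam equation with the singular elastic response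
f(r) = (k/2)(r − 1/2 − 1/(2r³)). -/
theorem beam_energy_estimate (m γ k kv T : ℝ)
    (hm : 0 < m) (hγ : 0 < γ) (hk : 0 < k) (hkv : 0 < kv) (hT : 0 < T)
    (u g : ℝ → ℝ → ℝ) (q : ℝ → ℝ)
    (hu : ContDiff ℝ (⊤ : ℕ∞) (Function.uncurry u))
    (hg : ContDiff ℝ 1 (Function.uncurry g))
    (hq : Continuous q)
    (hux : ∀ t ∈ Icc (0:ℝ) T, ∀ x ∈ Icc (0:ℝ) 1, 0 < deriv (u t) x)
    (hpde : ∀ t ∈ Ioo (0:ℝ) T, ∀ x ∈ Ioo (0:ℝ) 1,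
      m * deriv (fun τ => deriv (fun σ => u σ x) τ) t +
        γ * deriv (deriv (deriv (deriv (u t)))) x -
        deriv (fun ξ => (k/2) * (deriv (u t) ξ - 1/2 - 1/(2 * (deriv (u t) ξ)^3)) +
          kv * deriv (fun τ => deriv (u τ) ξ) t) x = deriv (g t) x)
    (hbc0 : ∀ t ∈ Icc (0:ℝ) T, u t 0 = 0)
    (hbc1 : ∀ t ∈ Icc (0:ℝ) T, deriv (deriv (u t)) 0 = 0)
    (hbc2 : ∀ t ∈ Icc (0:ℝ) T, deriv (deriv (u t)) 1 = 0)
    (hbc3 : ∀ t ∈ Icc (0:ℝ) T,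
      -γ * deriv (deriv (deriv (u t))) 1 +
        (k/2) * (deriv (u t) 1 - 1/2 - 1/(2 * (deriv (u t) 1)^3)) +
        kv * deriv (fun τ => deriv (u τ) 1) t + g t 1 = q t) :
    ∀ t ∈ Icc (0:ℝ) T,
      (m/2) * (∫ x in (0:ℝ)..1, (deriv (fun τ => u τ x) t)^2) +
        (γ/2) * (∫ x in (0:ℝ)..1, (deriv (deriv (u t)) x)^2) +
        (k/8) * ((∫ x in (0:ℝ)..1, (deriv (u t) x)^2) +
          (∫ x in (0:ℝ)..1, 1/(deriv (u t) x)^2)) +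
        (kv/2) * (∫ τ in (0:ℝ)..t, ∫ x in (0:ℝ)..1, (deriv (fun σ => deriv (u σ) x) τ)^2) ≤
      (m/2) * (∫ x in (0:ℝ)..1, (deriv (fun τ => u τ x) 0)^2) +
        (γ/2) * (∫ x in (0:ℝ)..1, (deriv (deriv (u 0)) x)^2) +
        (k/4) * ((∫ x in (0:ℝ)..1, (deriv (u 0) x)^2) +
          (1/2) * (∫ x in (0:ℝ)..1, 1/(deriv (u 0) x)^2) + 1/2) +
        (1/kv) * (∫ τ in (0:ℝ)..t, ((∫ x in (0:ℝ)..1, (g τ x)^2) + (q τ)^2)) := by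
  intro t ht
  obtain ⟨ht0, htT⟩ := ht
  -- partial derivative fields
  set A : ℝ → ℝ → ℝ := pd (1,0) u with hA_def
  set B : ℝ → ℝ → ℝ := pd (0,1) u with hB_def
  set C : ℝ → ℝ → ℝ := pd (0,1) B with hC_def
  set D3 : ℝ → ℝ → ℝ := pd (0,1) C with hD3_def
  set E4 : ℝ → ℝ → ℝ := pd (0,1) D3 with hE4_def
  set P : ℝ → ℝ → ℝ := pd (1,0) B with hP_def
  set Pd : ℝ → ℝ → ℝ := pd (0,1) P with hPd_def
  set At : ℝ → ℝ → ℝ := pd (1,0) A with hAt_def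
  have hAs : ContDiff ℝ (⊤ : ℕ∞) (uncurry A) := contDiff_pd hu _
  have hBs : ContDiff ℝ (⊤ : ℕ∞) (uncurry B) := contDiff_pd hu _
  have hCs : ContDiff ℝ (⊤ : ℕ∞) (uncurry C) := contDiff_pd hBs _
  have hD3s : ContDiff ℝ (⊤ : ℕ∞) (uncurry D3) := contDiff_pd hCs _
  have hPs : ContDiff ℝ (⊤ : ℕ∞) (uncurry P) := contDiff_pd hBs _
  have hPds : ContDiff ℝ (⊤ : ℕ∞) (uncurry Pd) := contDiff_pd hPs _
  have hAts : ContDiff ℝ (⊤ : ℕ∞) (uncurry At) := contDiff_pd hAs _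
  -- rewriting the statement's derivatives
  have rB : ∀ s, deriv (u s) = B s := fun s => deriv_slice2 hu s
  have rA : ∀ s x, deriv (fun τ => u τ x) s = A s x := fun s x => deriv_slice1 hu s x
  have rC : ∀ s, deriv (deriv (u s)) = C s := fun s => by rw [rB]; exact deriv_slice2 hBs s
  have rD : ∀ s, deriv (deriv (deriv (u s))) = D3 s := fun s => by
    rw [rC]; exact deriv_slice2 hCs s
  have rE : ∀ s, deriv (deriv (deriv (deriv (u s)))) = E4 s := fun s => by
    rw [rD]; exact deriv_slice2 hD3s s
  have rP : ∀ s x, deriv (fun σ => deriv (u σ) x) s = P s x := fun s x => by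
    have h : (fun σ => deriv (u σ) x) = fun σ => B σ x := by
      funext σ; rw [rB]
    rw [h]; exact deriv_slice1 hBs s x
  have rC2 : ∀ s, deriv (B s) = C s := fun s => deriv_slice2 hBs s
  have rP2 : ∀ s x, deriv (fun σ => B σ x) s = P s x := fun s x => deriv_slice1 hBs s x
  have rAt : ∀ s x, deriv (fun τ => deriv (fun σ => u σ x) τ) s = At s x := fun s x => by
    have h : (fun τ => deriv (fun σ => u σ x) τ) = fun τ => A τ x := by
      funext τ; exact rA τ x
    rw [h]; exact deriv_slice1 hAs s x
  -- symmetry of mixed partials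
  have symA : ∀ s x, pd (0,1) A s x = P s x := fun s x => pd_comm hu (0,1) (1,0) s x
  have symC : ∀ s x, pd (1,0) C s x = Pd s x := fun s x => pd_comm hBs (1,0) (0,1) s x
  -- positivity of B
  have hpos : ∀ s ∈ Icc (0:ℝ) T, ∀ x ∈ Icc (0:ℝ) 1, 0 < B s x := by
    intro s hs x hx
    have := hux s hs x hx
    rwa [rB] at this
  have hBne : ∀ s ∈ Icc (0:ℝ) T, ∀ x ∈ Icc (0:ℝ) 1, B s x ≠ 0 := fun s hs x hx =>
    ne_of_gt (hpos s hs x hx)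
  -- the x-derivative of g, as a continuous field
  set gx : ℝ → ℝ → ℝ := fun s x => fderiv ℝ (uncurry g) (s, x) (0, 1) with hgx_def
  have hgc : Continuous (uncurry g) := hg.continuous
  have hgd : Differentiable ℝ (uncurry g) := hg.differentiable (by simp)
  have hgxc : Continuous (uncurry gx) := by
    have h1 : Continuous (fderiv ℝ (uncurry g)) := hg.continuous_fderiv (by simp)
    exact h1.clm_apply continuous_const
  have hgslice : ∀ s x, HasDerivAt (g s) (gx s x) x := fun s x =>
    hasDerivAt_slice2' (hgd (s, x)).hasFDerivAt
  -- the PDE in field form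
  have hpde' : ∀ s ∈ Ioo (0:ℝ) T, ∀ x ∈ Ioo (0:ℝ) 1,
      m * At s x + γ * E4 s x -
        (k / 2 * (1 + 3 / (2 * (B s x) ^ 4)) * C s x + kv * Pd s x) = gx s x := by
    intro s hs x hx
    have hne : B s x ≠ 0 :=
      hBne s (Ioo_subset_Icc_self hs) x (Ioo_subset_Icc_self hx)
    have h0 := hpde s hs x hx
    rw [rAt, rE] at h0
    have hmid : deriv (fun ξ => (k/2) * (deriv (u s) ξ - 1/2 - 1/(2 * (deriv (u s) ξ)^3)) +
        kv * deriv (fun τ => deriv (u τ) ξ) s) x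
        = k / 2 * (1 + 3 / (2 * (B s x) ^ 4)) * C s x + kv * Pd s x := by
      have hfun : (fun ξ => (k/2) * (deriv (u s) ξ - 1/2 - 1/(2 * (deriv (u s) ξ)^3)) +
          kv * deriv (fun τ => deriv (u τ) ξ) s)
          = fun ξ => fk k (B s ξ) + kv * P s ξ := by
        funext ξ; rw [rB, rP]; rfl
      rw [hfun]
      have hd : HasDerivAt (fun ξ => fk k (B s ξ) + kv * P s ξ)
          (k / 2 * (1 + 3 / (2 * (B s x) ^ 4)) * C s x + kv * Pd s x) x :=
        ((hasDerivAt_fk hne).comp x (hasDerivAt_slice2 hBs s x)).add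
          ((hasDerivAt_slice2 hPs s x).const_mul kv)
      exact hd.deriv
    rw [hmid] at h0
    rw [h0]
    exact (hgslice s x).deriv
  -- boundary conditions in field form
  have hbc1' : ∀ s ∈ Icc (0:ℝ) T, C s 0 = 0 := fun s hs => by
    rw [← rC]; exact hbc1 s hs
  have hbc2' : ∀ s ∈ Icc (0:ℝ) T, C s 1 = 0 := fun s hs => by
    rw [← rC]; exact hbc2 s hs
  have hbc3' : ∀ s ∈ Icc (0:ℝ) T,
      -γ * D3 s 1 + fk k (B s 1) + kv * P s 1 + g s 1 = q s := fun s hs => by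
    have h0 := hbc3 s hs
    rw [rD, rB, rP] at h0
    exact h0
  have hA0 : ∀ s ∈ Ioo (0:ℝ) T, A s 0 = 0 := by
    intro s hs
    rw [← rA]
    have hev : (fun τ => u τ 0) =ᶠ[nhds s] fun _ => (0:ℝ) := by
      filter_upwards [Ioo_mem_nhds hs.1 hs.2] with τ hτ
      exact hbc0 τ (Ioo_subset_Icc_self hτ)
    rw [hev.deriv_eq]
    simp
  -- energy density and its time derivative
  set ee : ℝ → ℝ → ℝ := fun s x => m/2 * A s x ^ 2 + γ/2 * C s x ^ 2 + Fk k (B s x)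
    with hee_def
  set et : ℝ → ℝ → ℝ := fun s x =>
    m * A s x * At s x + γ * C s x * Pd s x + fk k (B s x) * P s x with het_def
  have hIccsub : Icc (0:ℝ) t ⊆ Icc (0:ℝ) T := Icc_subset_Icc le_rfl htT
  have hfkBC : ContinuousOn (fun p : ℝ × ℝ => fk k (B p.1 p.2))
      (Icc (0:ℝ) T ×ˢ Icc (0:ℝ) 1) := by
    intro p hp
    have h1 : ContinuousAt (fk k ∘ (fun q : ℝ × ℝ => B q.1 q.2)) p :=
      ContinuousAt.comp (continuousAt_fk (hBne p.1 hp.1 p.2 hp.2))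
        (hBs.continuous.continuousAt)
    exact h1.continuousWithinAt
  have hFkBC : ContinuousOn (fun p : ℝ × ℝ => Fk k (B p.1 p.2))
      (Icc (0:ℝ) T ×ˢ Icc (0:ℝ) 1) := by
    intro p hp
    have h1 : ContinuousAt (Fk k ∘ (fun q : ℝ × ℝ => B q.1 q.2)) p :=
      ContinuousAt.comp (continuousAt_Fk (hBne p.1 hp.1 p.2 hp.2))
        (hBs.continuous.continuousAt)
    exact h1.continuousWithinAt
  have heeC : ContinuousOn (uncurry ee) (Icc (0:ℝ) T ×ˢ Icc (0:ℝ) 1) := by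
    have c1 : Continuous (fun p : ℝ × ℝ => m/2 * A p.1 p.2 ^ 2 + γ/2 * C p.1 p.2 ^ 2) :=
      (continuous_const.mul (hAs.continuous.pow 2)).add
        (continuous_const.mul (hCs.continuous.pow 2))
    exact c1.continuousOn.add hFkBC
  have hetC : ContinuousOn (uncurry et) (Icc (0:ℝ) T ×ˢ Icc (0:ℝ) 1) := by
    have c1 : Continuous (fun p : ℝ × ℝ =>
        m * A p.1 p.2 * At p.1 p.2 + γ * C p.1 p.2 * Pd p.1 p.2) :=
      ((continuous_const.mul hAs.continuous).mul hAts.continuous).add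
        ((continuous_const.mul hCs.continuous).mul hPds.continuous)
    exact c1.continuousOn.add (hfkBC.mul hPs.continuous.continuousOn)
  have heeX : ∀ s ∈ Icc (0:ℝ) T, ContinuousOn (fun x => ee s x) (Icc (0:ℝ) 1) :=
    fun s hs => continuousOn_slice2 heeC hs
  have hetX : ∀ s ∈ Icc (0:ℝ) T, ContinuousOn (fun x => et s x) (Icc (0:ℝ) 1) :=
    fun s hs => continuousOn_slice2 hetC hs
  have heeT : ∀ x ∈ Icc (0:ℝ) 1, ContinuousOn (fun s => ee s x) (Icc (0:ℝ) T) :=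
    fun x hx => continuousOn_slice1 heeC hx
  have hetT : ∀ x ∈ Icc (0:ℝ) 1, ContinuousOn (fun s => et s x) (Icc (0:ℝ) T) :=
    fun x hx => continuousOn_slice1 hetC hx
  have htmem : t ∈ Icc (0:ℝ) T := ⟨ht0, htT⟩
  have h0mem : (0:ℝ) ∈ Icc (0:ℝ) T := ⟨le_rfl, hT.le⟩
  -- Step 1: FTC in time, for each fixed x
  have hS1 : ∀ x ∈ Icc (0:ℝ) 1, (∫ τ in (0:ℝ)..t, et τ x) = ee t x - ee 0 x := by
    intro x hx
    apply intervalIntegral.integral_eq_sub_of_hasDerivAt_of_le ht0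
      ((heeT x hx).mono hIccsub)
    · intro τ hτ
      have hτT : τ ∈ Icc (0:ℝ) T := ⟨hτ.1.le, hτ.2.le.trans htT⟩
      have hne : B τ x ≠ 0 := hBne τ hτT x hx
      have h1 : HasDerivAt (fun s => A s x) (At τ x) τ := hasDerivAt_slice1 hAs τ x
      have h2 : HasDerivAt (fun s => C s x) (Pd τ x) τ := by
        have := hasDerivAt_slice1 hCs τ x
        rwa [symC] at this
      have h3 : HasDerivAt (fun s => B s x) (P τ x) τ := hasDerivAt_slice1 hBs τ x
      have h4 : HasDerivAt (fun s => Fk k (B s x)) (fk k (B τ x) * P τ x) τ :=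
        by have := (hasDerivAt_Fk (k := k) hne).comp τ h3; exact this
      have H := (((h1.pow 2).const_mul (m/2)).add ((h2.pow 2).const_mul (γ/2))).add h4
      refine H.congr_deriv ?_
      push_cast
      ring
    · have h5 := (hetT x hx).mono hIccsub
      rw [← uIcc_of_le ht0] at h5
      exact h5.intervalIntegrable
  set dE : ℝ → ℝ := fun s => ∫ x in (0:ℝ)..1, et s x with hdE_def
  -- Fubini
  have hJ2 : Integrable (uncurry et)
      ((volume.restrict (Ioc (0:ℝ) t)).prod (volume.restrict (Ioc (0:ℝ) 1))) := by
    rw [Measure.prod_restrict, ← Measure.volume_eq_prod]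
    have h1 : IntegrableOn (uncurry et) (Icc (0:ℝ) t ×ˢ Icc (0:ℝ) 1) :=
      (hetC.mono (prod_mono hIccsub subset_rfl)).integrableOn_compact
        (isCompact_Icc.prod isCompact_Icc)
    exact h1.mono_set (prod_mono Ioc_subset_Icc_self Ioc_subset_Icc_self)
  have hswap : (∫ x in (0:ℝ)..1, ∫ τ in (0:ℝ)..t, et τ x) = ∫ τ in (0:ℝ)..t, dE τ := by
    rw [hdE_def]
    simp_rw [intervalIntegral.integral_of_le ht0, intervalIntegral.integral_of_le zero_le_one]
    exact MeasureTheory.integral_integral_swap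
      ((integrable_swap_iff (f := uncurry et)).mpr hJ2)
  have hdEint : IntervalIntegrable dE volume 0 t := by
    rw [intervalIntegrable_iff_integrableOn_Ioc_of_le ht0]
    have h1 := hJ2.integral_prod_left
    rw [hdE_def]
    unfold IntegrableOn
    refine h1.congr (ae_of_all _ fun τ => ?_)
    show (∫ y in Ioc (0:ℝ) 1, uncurry et (τ, y)) = ∫ x in (0:ℝ)..1, et τ x
    rw [intervalIntegral.integral_of_le zero_le_one]
    rfl
  have i_ee_t : IntervalIntegrable (fun x => ee t x) volume 0 1 := by
    have h5 := heeX t htmem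
    rw [← uIcc_of_le (zero_le_one (α := ℝ))] at h5
    exact h5.intervalIntegrable
  have i_ee_0 : IntervalIntegrable (fun x => ee 0 x) volume 0 1 := by
    have h5 := heeX 0 h0mem
    rw [← uIcc_of_le (zero_le_one (α := ℝ))] at h5
    exact h5.intervalIntegrable
  have hEdiff : (∫ x in (0:ℝ)..1, ee t x) - (∫ x in (0:ℝ)..1, ee 0 x)
      = ∫ τ in (0:ℝ)..t, dE τ := by
    rw [← intervalIntegral.integral_sub i_ee_t i_ee_0, ← hswap]
    apply intervalIntegral.integral_congr
    intro x hx
    rw [uIcc_of_le (zero_le_one (α := ℝ))] at hx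
    exact (hS1 x hx).symm
  have sl : ∀ (w : ℝ → ℝ → ℝ), Continuous (uncurry w) → ∀ s, Continuous (fun x => w s x) :=
    fun w hw s => hw.comp (continuous_const.prodMk continuous_id)
  -- Step 3: differential energy inequality at each interior time
  have hkey : ∀ τ ∈ Ioo (0:ℝ) t,
      dE τ + kv/2 * (∫ x in (0:ℝ)..1, P τ x ^ 2)
        ≤ (1/kv) * ((∫ x in (0:ℝ)..1, (g τ x)^2) + (q τ)^2) := by
    intro τ hτ
    have hτT : τ ∈ Icc (0:ℝ) T := ⟨hτ.1.le, hτ.2.le.trans htT⟩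
    have hτO : τ ∈ Ioo (0:ℝ) T := ⟨hτ.1, hτ.2.trans_le htT⟩
    have cA : Continuous (fun x => A τ x) := sl A hAs.continuous τ
    have cB : Continuous (fun x => B τ x) := sl B hBs.continuous τ
    have cC : Continuous (fun x => C τ x) := sl C hCs.continuous τ
    have cD3 : Continuous (fun x => D3 τ x) := sl D3 hD3s.continuous τ
    have cP : Continuous (fun x => P τ x) := sl P hPs.continuous τ
    have cg : Continuous (fun x => g τ x) := sl g hgc τ
    set W : ℝ → ℝ := fun x =>
      A τ x * (-γ * D3 τ x + fk k (B τ x) + kv * P τ x + g τ x) + γ * (C τ x * P τ x)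
      with hW_def
    have hWd : ∀ x ∈ Ioo (0:ℝ) 1, HasDerivAt W
        (et τ x + kv * P τ x ^ 2 + g τ x * P τ x) x := by
      intro x hx
      have hxI : x ∈ Icc (0:ℝ) 1 := Ioo_subset_Icc_self hx
      have hne : B τ x ≠ 0 := hBne τ hτT x hxI
      have a' : HasDerivAt (fun y => A τ y) (P τ x) x := by
        have := hasDerivAt_slice2 hAs τ x
        rwa [symA] at this
      have b' : HasDerivAt (fun y => B τ y) (C τ x) x := hasDerivAt_slice2 hBs τ x
      have c' : HasDerivAt (fun y => C τ y) (D3 τ x) x := hasDerivAt_slice2 hCs τ x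
      have d' : HasDerivAt (fun y => D3 τ y) (E4 τ x) x := hasDerivAt_slice2 hD3s τ x
      have p' : HasDerivAt (fun y => P τ y) (Pd τ x) x := hasDerivAt_slice2 hPs τ x
      have gg' : HasDerivAt (fun y => g τ y) (gx τ x) x := hgslice τ x
      have f' : HasDerivAt (fun y => fk k (B τ y))
          (k / 2 * (1 + 3 / (2 * B τ x ^ 4)) * C τ x) x :=
        (hasDerivAt_fk hne).comp x b'
      have inner' := (((d'.const_mul (-γ)).add f').add (p'.const_mul kv)).add gg'
      have H := (a'.mul inner').add ((c'.mul p').const_mul γ)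
      refine H.congr_deriv ?_
      symm
      simp only [Pi.add_apply]
      have hp := hpde' τ hτO x hx
      linear_combination (A τ x) * hp
    have h1 : ContinuousOn (fun x => fk k (B τ x)) (Icc (0:ℝ) 1) :=
      continuousOn_slice2 hfkBC hτT
    have hinnerC : ContinuousOn
        (fun x => -γ * D3 τ x + fk k (B τ x) + kv * P τ x + g τ x) (Icc (0:ℝ) 1) :=
      (((continuous_const.mul cD3 : Continuous fun x => -γ * D3 τ x).continuousOn.add h1).add
        (continuous_const.mul cP : Continuous fun x => kv * P τ x).continuousOn).add cg.continuousOn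
    have hWc : ContinuousOn W (Icc (0:ℝ) 1) :=
      (cA.continuousOn.mul hinnerC).add (continuous_const.mul (cC.mul cP) : Continuous fun x => γ * (C τ x * P τ x)).continuousOn
    have iet : IntervalIntegrable (fun x => et τ x) volume 0 1 := by
      have h5 := hetX τ hτT
      rw [← uIcc_of_le (zero_le_one (α := ℝ))] at h5
      exact h5.intervalIntegrable
    have iP2 : IntervalIntegrable (fun x => kv * P τ x ^ 2) volume 0 1 :=
      (continuous_const.mul (cP.pow 2) : Continuous fun x => kv * P τ x ^ 2).intervalIntegrable 0 1
    have igP : IntervalIntegrable (fun x => g τ x * P τ x) volume 0 1 :=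
      (cg.mul cP).intervalIntegrable 0 1
    have hftc : ∫ x in (0:ℝ)..1, (et τ x + kv * P τ x ^ 2 + g τ x * P τ x) = W 1 - W 0 := by
      apply intervalIntegral.integral_eq_sub_of_hasDerivAt_of_le zero_le_one hWc hWd
      exact (iet.add iP2).add igP
    have hW1 : W 1 = A τ 1 * q τ := by
      simp only [hW_def]
      rw [hbc3' τ hτT, hbc2' τ hτT]
      ring
    have hW0 : W 0 = 0 := by
      simp only [hW_def]
      rw [hA0 τ hτO, hbc1' τ hτT]
      ring
    have hA1 : A τ 1 = ∫ x in (0:ℝ)..1, P τ x := by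
      have h2 : ∫ x in (0:ℝ)..1, P τ x = A τ 1 - A τ 0 := by
        apply intervalIntegral.integral_eq_sub_of_hasDerivAt
        · intro x hx
          have := hasDerivAt_slice2 hAs τ x
          rwa [symA] at this
        · exact cP.intervalIntegrable 0 1
      rw [h2, hA0 τ hτO]
      ring
    have hsplit : (∫ x in (0:ℝ)..1, et τ x) + kv * (∫ x in (0:ℝ)..1, P τ x ^ 2)
        + (∫ x in (0:ℝ)..1, g τ x * P τ x) = W 1 - W 0 := by
      rw [← intervalIntegral.integral_const_mul,
        ← intervalIntegral.integral_add iet iP2,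
        ← intervalIntegral.integral_add (iet.add iP2) igP]
      exact hftc
    -- Young's inequality bound
    have iqgP : IntervalIntegrable (fun x => (q τ - g τ x) * P τ x) volume 0 1 :=
      ((continuous_const.sub cg).mul cP).intervalIntegrable 0 1
    have ibnd : IntervalIntegrable
        (fun x => 1/kv * ((g τ x)^2 + (q τ)^2) + kv/2 * P τ x ^ 2) volume 0 1 :=
      ((continuous_const.mul ((cg.pow 2).add continuous_const)).add
        (continuous_const.mul (cP.pow 2))).intervalIntegrable 0 1
    have hyoung : (∫ x in (0:ℝ)..1, (q τ - g τ x) * P τ x)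
        ≤ ∫ x in (0:ℝ)..1, (1/kv * ((g τ x)^2 + (q τ)^2) + kv/2 * P τ x ^ 2) := by
      apply intervalIntegral.integral_mono_on zero_le_one iqgP ibnd
      intro x hx
      have hb1 : kv * ((q τ - g τ x) * P τ x)
          ≤ (g τ x)^2 + (q τ)^2 + kv^2/2 * P τ x ^ 2 := by
        nlinarith [sq_nonneg (q τ - g τ x - kv * P τ x), sq_nonneg (q τ + g τ x)]
      rw [← mul_le_mul_iff_right₀ hkv]
      calc kv * ((q τ - g τ x) * P τ x) ≤ (g τ x)^2 + (q τ)^2 + kv^2/2 * P τ x ^ 2 := hb1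
        _ = kv * (1/kv * ((g τ x)^2 + (q τ)^2) + kv/2 * P τ x ^ 2) := by
            field_simp
    have igsq : IntervalIntegrable (fun x => (g τ x)^2) volume 0 1 :=
      (cg.pow 2).intervalIntegrable 0 1
    have iqsq : IntervalIntegrable (fun x => ((q τ)^2 : ℝ)) volume 0 1 :=
      continuous_const.intervalIntegrable 0 1
    have hrhs : (∫ x in (0:ℝ)..1, (1/kv * ((g τ x)^2 + (q τ)^2) + kv/2 * P τ x ^ 2))
        = 1/kv * ((∫ x in (0:ℝ)..1, (g τ x)^2) + (q τ)^2)
          + kv/2 * (∫ x in (0:ℝ)..1, P τ x ^ 2) := by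
      rw [intervalIntegral.integral_add
          ((igsq.add iqsq).const_mul (1/kv))
          (show IntervalIntegrable (fun x => kv/2 * P τ x ^ 2) volume 0 1 from ((cP.pow 2).intervalIntegrable 0 1).const_mul (kv/2)),
        intervalIntegral.integral_const_mul, intervalIntegral.integral_const_mul,
        intervalIntegral.integral_add igsq iqsq, intervalIntegral.integral_const]
      norm_num
    have hlhs : (∫ x in (0:ℝ)..1, (q τ - g τ x) * P τ x)
        = q τ * (∫ x in (0:ℝ)..1, P τ x) - (∫ x in (0:ℝ)..1, g τ x * P τ x) := by
      have h3 : (fun x => (q τ - g τ x) * P τ x)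
          = fun x => q τ * P τ x - g τ x * P τ x := by
        funext x; ring
      rw [h3, intervalIntegral.integral_sub (show IntervalIntegrable (fun x => q τ * P τ x) volume 0 1 from (continuous_const.mul cP).intervalIntegrable 0 1) igP,
        intervalIntegral.integral_const_mul]
    have hdEeq : dE τ = ∫ x in (0:ℝ)..1, et τ x := rfl
    rw [hdEeq]
    have hIPnn : (0:ℝ) ≤ ∫ x in (0:ℝ)..1, P τ x ^ 2 := by
      apply intervalIntegral.integral_nonneg zero_le_one
      intro x _
      positivity
    rw [hA1] at hW1
    linarith [hsplit, hyoung, hrhs, hlhs, hW1, hW0, hIPnn]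
  -- Step 4: integrate the differential inequality in time
  have cIP : Continuous (fun s => ∫ x in (0:ℝ)..1, P s x ^ 2) := by
    apply intervalIntegral.continuous_parametric_intervalIntegral_of_continuous'
    exact hPs.continuous.pow 2
  have cIG : Continuous (fun s => ∫ x in (0:ℝ)..1, (g s x) ^ 2) := by
    apply intervalIntegral.continuous_parametric_intervalIntegral_of_continuous'
    exact hgc.pow 2
  have intR : IntervalIntegrable
      (fun s => (1/kv) * ((∫ x in (0:ℝ)..1, (g s x)^2) + (q s)^2)) volume 0 t :=
    (continuous_const.mul (cIG.add (hq.pow 2))).intervalIntegrable 0 t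
  have intP : IntervalIntegrable
      (fun s => kv/2 * ∫ x in (0:ℝ)..1, P s x ^ 2) volume 0 t :=
    (continuous_const.mul cIP).intervalIntegrable 0 t
  have intL : IntervalIntegrable
      (fun s => dE s + kv/2 * ∫ x in (0:ℝ)..1, P s x ^ 2) volume 0 t :=
    hdEint.add intP
  have hmono : (∫ s in (0:ℝ)..t, (dE s + kv/2 * ∫ x in (0:ℝ)..1, P s x ^ 2))
      ≤ ∫ s in (0:ℝ)..t, (1/kv) * ((∫ x in (0:ℝ)..1, (g s x)^2) + (q s)^2) := by
    apply intervalIntegral.integral_mono_ae_restrict ht0 intL intR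
    have h1 : volume.restrict (Icc (0:ℝ) t) = volume.restrict (Ioo (0:ℝ) t) :=
      (Measure.restrict_congr_set Ioo_ae_eq_Icc).symm
    rw [Filter.EventuallyLE, h1]
    filter_upwards [ae_restrict_mem measurableSet_Ioo] with s hs using hkey s hs
  have hL : (∫ s in (0:ℝ)..t, (dE s + kv/2 * ∫ x in (0:ℝ)..1, P s x ^ 2))
      = ((∫ x in (0:ℝ)..1, ee t x) - (∫ x in (0:ℝ)..1, ee 0 x))
        + kv/2 * (∫ s in (0:ℝ)..t, ∫ x in (0:ℝ)..1, P s x ^ 2) := by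
    rw [intervalIntegral.integral_add hdEint intP, intervalIntegral.integral_const_mul,
      hEdiff]
  have hR : (∫ s in (0:ℝ)..t, (1/kv) * ((∫ x in (0:ℝ)..1, (g s x)^2) + (q s)^2))
      = (1/kv) * ∫ s in (0:ℝ)..t, ((∫ x in (0:ℝ)..1, (g s x)^2) + (q s)^2) :=
    intervalIntegral.integral_const_mul _ _
  rw [hL, hR] at hmono
  -- Step 5: pointwise bounds on the elastic energy
  have hsplitE : ∀ s, s ∈ Icc (0:ℝ) T → (∫ x in (0:ℝ)..1, ee s x)
      = m/2 * (∫ x in (0:ℝ)..1, A s x ^ 2) + γ/2 * (∫ x in (0:ℝ)..1, C s x ^ 2)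
        + ∫ x in (0:ℝ)..1, Fk k (B s x) := by
    intro s hs
    have iA : IntervalIntegrable (fun x => m/2 * A s x ^ 2) volume 0 1 :=
      (continuous_const.mul ((sl A hAs.continuous s).pow 2)).intervalIntegrable 0 1
    have iC : IntervalIntegrable (fun x => γ/2 * C s x ^ 2) volume 0 1 :=
      (continuous_const.mul ((sl C hCs.continuous s).pow 2)).intervalIntegrable 0 1
    have iF : IntervalIntegrable (fun x => Fk k (B s x)) volume 0 1 := by
      have h5 := continuousOn_slice2 hFkBC hs
      rw [← uIcc_of_le (zero_le_one (α := ℝ))] at h5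
      exact h5.intervalIntegrable
    calc (∫ x in (0:ℝ)..1, ee s x)
        = ∫ x in (0:ℝ)..1, (m/2 * A s x ^ 2 + γ/2 * C s x ^ 2 + Fk k (B s x)) := rfl
      _ = m/2 * (∫ x in (0:ℝ)..1, A s x ^ 2) + γ/2 * (∫ x in (0:ℝ)..1, C s x ^ 2)
          + ∫ x in (0:ℝ)..1, Fk k (B s x) := by
          rw [intervalIntegral.integral_add (iA.add iC) iF,
            intervalIntegral.integral_add iA iC,
            intervalIntegral.integral_const_mul, intervalIntegral.integral_const_mul]
  have iFk : ∀ s, s ∈ Icc (0:ℝ) T →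
      IntervalIntegrable (fun x => Fk k (B s x)) volume 0 1 := by
    intro s hs
    have h5 := continuousOn_slice2 hFkBC hs
    rw [← uIcc_of_le (zero_le_one (α := ℝ))] at h5
    exact h5.intervalIntegrable
  have iB2 : ∀ s : ℝ, IntervalIntegrable (fun x => B s x ^ 2) volume 0 1 := fun s =>
    ((sl B hBs.continuous s).pow 2).intervalIntegrable 0 1
  have iBinv : ∀ s, s ∈ Icc (0:ℝ) T →
      IntervalIntegrable (fun x => 1/(B s x)^2) volume 0 1 := by
    intro s hs
    have h5 : ContinuousOn (fun x => 1/(B s x)^2) (Icc (0:ℝ) 1) := by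
      intro x hx
      exact (ContinuousAt.div continuousAt_const
        (((sl B hBs.continuous s).pow 2).continuousAt)
        (pow_ne_zero 2 (hBne s hs x hx))).continuousWithinAt
    rw [← uIcc_of_le (zero_le_one (α := ℝ))] at h5
    exact h5.intervalIntegrable
  have h5a : k/8 * ((∫ x in (0:ℝ)..1, B t x ^ 2) + (∫ x in (0:ℝ)..1, 1/(B t x)^2))
      ≤ (∫ x in (0:ℝ)..1, Fk k (B t x)) + k/8 := by
    have h6 : (∫ x in (0:ℝ)..1, k/8 * (B t x ^ 2 + 1/(B t x)^2))
        ≤ ∫ x in (0:ℝ)..1, (Fk k (B t x) + k/8) := by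
      apply intervalIntegral.integral_mono_on zero_le_one
        (((iB2 t).add (iBinv t htmem)).const_mul (k/8))
        ((iFk t htmem).add (continuous_const.intervalIntegrable 0 1))
      intro x hx
      exact Fk_lower hk (hpos t htmem x hx)
    rw [intervalIntegral.integral_const_mul,
      intervalIntegral.integral_add (iB2 t) (iBinv t htmem),
      intervalIntegral.integral_add (iFk t htmem) (continuous_const.intervalIntegrable 0 1),
      intervalIntegral.integral_const] at h6
    simp only [smul_eq_mul, sub_zero, one_mul] at h6
    linarith
  have h5b : (∫ x in (0:ℝ)..1, Fk k (B 0 x))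
      ≤ k/4 * ((∫ x in (0:ℝ)..1, B 0 x ^ 2)
        + 1/2 * (∫ x in (0:ℝ)..1, 1/(B 0 x)^2)) := by
    have h6 : (∫ x in (0:ℝ)..1, Fk k (B 0 x))
        ≤ ∫ x in (0:ℝ)..1, k/4 * (B 0 x ^ 2 + 1/2 * (1/(B 0 x)^2)) := by
      apply intervalIntegral.integral_mono_on zero_le_one (iFk 0 h0mem)
        (((iB2 0).add ((iBinv 0 h0mem).const_mul (1/2))).const_mul (k/4))
      intro x hx
      exact Fk_upper hk (hpos 0 h0mem x hx)
    rw [intervalIntegral.integral_const_mul,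
      intervalIntegral.integral_add (iB2 0) ((iBinv 0 h0mem).const_mul (1/2)),
      intervalIntegral.integral_const_mul] at h6
    exact h6
  simp only [rA, rB, rC, rC2, rP, rP2]
  have het := hsplitE t htmem
  have he0 := hsplitE 0 h0mem
  nlinarith [hmono, h5a, h5b, het, he0]

end Main
end

section
/- Let m, γ, k, k_v > 0, T > 0, Ĉ > 0. Let F : [0,T] × [0,1] → ℝ be smooth with |F| ≤ Ĉ, let b : [0,T] → ℝ be smooth with |b| ≤ Ĉ, let ζ : [0,T] × [0,1] → ℝ be continuous, and let η : [0,T] × [0,1] → ℝ be smooth and satisfy: m η_tt + γ η_xxxx − (k/2) η_xx − (k/4) ∂_x( F η_x ) − k_v η_txx = ζ on (0,T) × (0,1); η_xx(t,0) = η_xx(t,1) = 0 and η(t,0) = 0 for t ∈ [0,T]; b(t) η(t,1) + γ η_xxx(t,1) − (k/2) η_x(t,1) − (k/4) F(t,1) η_x(t,1) − k_v η_tx(t,1) = 0 for t ∈ [0,T]; and η(0,·) = 0, η_t(0,·) = 0. Then there exists a constant C' > 0 depending only on Ĉ, T, m, γ, k, k_v and ∫₀ᵀ∫₀¹ ζ²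 dx dt such that for all t ∈ [0,T]: ∫₀¹ η_t(t)² dx + ∫₀¹ η_x(t)² dx + ∫₀¹ η_xx(t)² dx ≤ C'. -/
open Set MeasureTheory Function intervalIntegral

namespace DB

/-- partial derivative in the second (space) variable -/
noncomputable def dxf (f : ℝ → ℝ → ℝ) : ℝ → ℝ → ℝ := fun t x => deriv (f t) x

/-- partial derivative in the first (time) variable -/
noncomputable def dtf (f : ℝ → ℝ → ℝ) : ℝ → ℝ → ℝ := fun t x => deriv (fun τ => f τ x) t

lemma contX {f : ℝ → ℝ → ℝ} (hf : Continuous ↿f) (t : ℝ) : Continuous (f t) :=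
  hf.comp (continuous_const.prodMk continuous_id)

lemma contT {f : ℝ → ℝ → ℝ} (hf : Continuous ↿f) (x : ℝ) : Continuous (fun τ => f τ x) :=
  hf.comp (continuous_id.prodMk continuous_const)

lemma cdX {f : ℝ → ℝ → ℝ} (hf : ContDiff ℝ (⊤ : ℕ∞) ↿f) (t : ℝ) : ContDiff ℝ (⊤ : ℕ∞) (f t) :=
  hf.comp (contDiff_const.prodMk contDiff_id)

lemma cdT {f : ℝ → ℝ → ℝ} (hf : ContDiff ℝ (⊤ : ℕ∞) ↿f) (x : ℝ) : ContDiff ℝ (⊤ : ℕ∞) (fun τ => f τ x) :=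
  hf.comp (contDiff_id.prodMk contDiff_const)

lemma dx {f : ℝ → ℝ → ℝ} (hf : ContDiff ℝ (⊤ : ℕ∞) ↿f) : ContDiff ℝ (⊤ : ℕ∞) ↿(dxf f) := by
  have h1 : ContDiff ℝ (⊤ : ℕ∞) (uncurry (fun (p : ℝ × ℝ) (y : ℝ) => f p.1 y)) :=
    hf.comp ((contDiff_fst.comp contDiff_fst).prodMk contDiff_snd)
  have h2 := h1.fderiv_apply (g := Prod.snd) (k := fun _ => (1:ℝ))
    (n := (⊤ : ℕ∞)) contDiff_snd contDiff_const (by simp)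
  have h3 : (↿(dxf f)) = fun p : ℝ × ℝ => (fderiv ℝ (fun y => f p.1 y) p.2) 1 := by
    funext p; exact fderiv_apply_one_eq_deriv.symm
  rw [h3]; exact h2

lemma dt {f : ℝ → ℝ → ℝ} (hf : ContDiff ℝ (⊤ : ℕ∞) ↿f) : ContDiff ℝ (⊤ : ℕ∞) ↿(dtf f) := by
  have h1 : ContDiff ℝ (⊤ : ℕ∞) (uncurry (fun (p : ℝ × ℝ) (τ : ℝ) => f τ p.2)) :=
    hf.comp (contDiff_snd.prodMk (contDiff_snd.comp contDiff_fst))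
  have h2 := h1.fderiv_apply (g := Prod.fst) (k := fun _ => (1:ℝ))
    (n := (⊤ : ℕ∞)) contDiff_fst contDiff_const (by simp)
  have h3 : (↿(dtf f)) = fun p : ℝ × ℝ => (fderiv ℝ (fun τ => f τ p.2) p.1) 1 := by
    funext p; exact fderiv_apply_one_eq_deriv.symm
  rw [h3]; exact h2

lemma diffX {f : ℝ → ℝ → ℝ} (hf : ContDiff ℝ (⊤ : ℕ∞) ↿f) (t x : ℝ) :
    HasDerivAt (f t) (dxf f t x) x :=
  (((cdX hf t).differentiable (by simp)) x).hasDerivAt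

lemma diffT {f : ℝ → ℝ → ℝ} (hf : ContDiff ℝ (⊤ : ℕ∞) ↿f) (t x : ℝ) :
    HasDerivAt (fun τ => f τ x) (dtf f t x) t :=
  (((cdT hf x).differentiable (by simp)) t).hasDerivAt

lemma mixed {f : ℝ → ℝ → ℝ} (hf : ContDiff ℝ (⊤ : ℕ∞) ↿f) (t x : ℝ) :
    dtf (dxf f) t x = dxf (dtf f) t x := by
  set G : ℝ × ℝ → ℝ := ↿f with hGdef
  have hGd : Differentiable ℝ G := hf.differentiable (by simp)
  have hG1 : ContDiff ℝ (⊤ : ℕ∞) (fderiv ℝ G) := hf.fderiv_right (by simp)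
  set H := fderiv ℝ (fderiv ℝ G) (t, x) with hH
  have hH' : HasFDerivAt (fderiv ℝ G) H (t, x) :=
    (hG1.differentiable (by simp) _).hasFDerivAt
  have symm := second_derivative_symmetric (f := G)
    (fun y => (hGd y).hasFDerivAt) hH' (1, 0) (0, 1)
  have hx : ∀ τ y, deriv (f τ) y = fderiv ℝ G (τ, y) (0, 1) := by
    intro τ y
    have h1 : HasFDerivAt (fun s : ℝ => ((τ, s) : ℝ × ℝ))
        ((ContinuousLinearMap.inr ℝ ℝ ℝ)) y := (HasFDerivAt.prodMk (hasFDerivAt_const τ y) (hasFDerivAt_id y))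
    exact (((hGd (τ, y)).hasFDerivAt.comp y h1).hasDerivAt).deriv
  have ht : ∀ τ y, deriv (fun σ => f σ y) τ = fderiv ℝ G (τ, y) (1, 0) := by
    intro τ y
    have h1 : HasFDerivAt (fun σ : ℝ => ((σ, y) : ℝ × ℝ))
        ((ContinuousLinearMap.inl ℝ ℝ ℝ)) τ := (HasFDerivAt.prodMk (hasFDerivAt_id τ) (hasFDerivAt_const y τ))
    exact (((hGd (τ, y)).hasFDerivAt.comp τ h1).hasDerivAt).deriv
  have hL : HasDerivAt (fun τ => fderiv ℝ G (τ, x) (0, 1)) (H (1, 0) (0, 1)) t := by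
    have h1 : HasDerivAt (fun τ => fderiv ℝ G (τ, x)) (H (1, 0)) t := by
      have := hH'.comp t ((HasFDerivAt.prodMk (hasFDerivAt_id t) (hasFDerivAt_const x t)) :
        HasFDerivAt (fun τ : ℝ => ((τ, x) : ℝ × ℝ)) (ContinuousLinearMap.inl ℝ ℝ ℝ) t)
      exact this.hasDerivAt
    exact (ContinuousLinearMap.apply ℝ ℝ (0,1) :
      (ℝ × ℝ →L[ℝ] ℝ) →L[ℝ] ℝ).hasFDerivAt.comp_hasDerivAt t h1
  have hR : HasDerivAt (fun y => fderiv ℝ G (t, y) (1, 0)) (H (0, 1) (1, 0)) x := by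
    have h1 : HasDerivAt (fun y => fderiv ℝ G (t, y)) (H (0, 1)) x := by
      have := hH'.comp x ((HasFDerivAt.prodMk (hasFDerivAt_const t x) (hasFDerivAt_id x)) :
        HasFDerivAt (fun y : ℝ => ((t, y) : ℝ × ℝ)) (ContinuousLinearMap.inr ℝ ℝ ℝ) x)
      exact this.hasDerivAt
    exact (ContinuousLinearMap.apply ℝ ℝ (1,0) :
      (ℝ × ℝ →L[ℝ] ℝ) →L[ℝ] ℝ).hasFDerivAt.comp_hasDerivAt x h1
  calc dtf (dxf f) t x
      = deriv (fun τ => fderiv ℝ G (τ, x) (0, 1)) t := by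
        unfold dtf dxf; congr 1; funext τ; exact hx τ x
    _ = H (1, 0) (0, 1) := hL.deriv
    _ = H (0, 1) (1, 0) := symm
    _ = deriv (fun y => fderiv ℝ G (t, y) (1, 0)) x := hR.deriv.symm
    _ = dxf (dtf f) t x := by
        unfold dtf dxf; congr 1; funext y; exact (ht t y).symm

lemma hasDerivAt_int01 (g g' : ℝ → ℝ → ℝ) (hg : Continuous ↿g) (hg' : Continuous ↿g')
    (hdiff : ∀ t x, HasDerivAt (fun τ => g τ x) (g' t x) t) (t₀ : ℝ) :
    HasDerivAt (fun t => ∫ x in (0:ℝ)..1, g t x) (∫ x in (0:ℝ)..1, g' t₀ x) t₀ := by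
  obtain ⟨C, hC⟩ : ∃ C, ∀ p ∈ Icc (t₀-1) (t₀+1) ×ˢ Icc (0:ℝ) 1, |(↿g') p| ≤ C := by
    obtain ⟨C, hC⟩ := (isCompact_Icc.prod isCompact_Icc).exists_bound_of_continuousOn
      hg'.continuousOn
    exact ⟨C, fun p hp => by simpa using hC p hp⟩
  have key := hasDerivAt_integral_of_dominated_loc_of_deriv_le (F := g) (F' := g')
    (x₀ := t₀) (a := (0:ℝ)) (b := 1) (bound := fun _ => C) (s := Metric.ball t₀ 1) (Metric.ball_mem_nhds t₀ one_pos)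
    (Filter.Eventually.of_forall fun t =>
      ((hg.comp (continuous_const.prodMk continuous_id)).aestronglyMeasurable :
        AEStronglyMeasurable (g t) _))
    ((hg.comp (continuous_const.prodMk continuous_id)).intervalIntegrable 0 1)
    ((hg'.comp (continuous_const.prodMk continuous_id)).aestronglyMeasurable)
    (Filter.Eventually.of_forall fun x hx t ht => by
      have hx' : x ∈ Icc (0:ℝ) 1 := by
        rcases hx with ⟨h1, h2⟩
        constructor <;> [exact le_of_lt (by simpa using h1); simpa using h2]
      have ht' : t ∈ Icc (t₀-1) (t₀+1) := by
        have := abs_lt.1 (by simpa [Real.dist_eq] using Metric.mem_ball.1 ht)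
        constructor <;> linarith [this.1, this.2]
      have hh : |g' t x| ≤ C := hC (t, x) ⟨ht', hx'⟩
      simpa [Real.norm_eq_abs] using hh)
    (intervalIntegrable_const (μ := volume))
    (Filter.Eventually.of_forall fun x _ t _ => hdiff t x)
  exact key.2

lemma sq_integral_le (f : ℝ → ℝ) (hf : Continuous f) :
    (∫ x in (0:ℝ)..1, f x)^2 ≤ ∫ x in (0:ℝ)..1, (f x)^2 := by
  set c := ∫ x in (0:ℝ)..1, f x with hc
  have h0 : (0:ℝ) ≤ ∫ x in (0:ℝ)..1, (f x - c)^2 :=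
    intervalIntegral.integral_nonneg (by norm_num) (fun _ _ => sq_nonneg _)
  have hint : ∫ x in (0:ℝ)..1, (f x - c)^2
      = (∫ x in (0:ℝ)..1, (f x)^2) - 2*c*c + c^2 := by
    have h1 : ∀ x, (f x - c)^2 = (f x)^2 - (2*c) * f x + c^2 := fun x => by ring
    simp only [h1]
    rw [intervalIntegral.integral_add, intervalIntegral.integral_sub]
    · rw [intervalIntegral.integral_const_mul]
      simp [← hc]
    · exact (hf.pow 2).intervalIntegrable 0 1
    · exact (continuous_const.mul hf).intervalIntegrable 0 1
    · exact ((hf.pow 2).sub (continuous_const.mul hf)).intervalIntegrable 0 1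
    · exact continuous_const.intervalIntegrable 0 1
  nlinarith [h0, hint]

end DB

open DB

set_option maxHeartbeats 4000000 in
/-- Uniform energy bound for the (time-reversed) dual linear beam problem
(Lemma 5.2): the constant C' depends only on Ĉ, T, m, γ, k, k_v and on a bound
Z for ∫₀ᵀ∫₀¹ ζ². -/
theorem dual_beam_uniform_bound (m γ k kv T Cb Z : ℝ)
    (hm : 0 < m) (hγ : 0 < γ) (hk : 0 < k) (hkv : 0 < kv) (hT : 0 < T) (hCb : 0 < Cb) :
    ∃ C' > 0, ∀ (F : ℝ → ℝ → ℝ) (b : ℝ → ℝ) (ζ η : ℝ → ℝ → ℝ),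
      ContDiff ℝ (⊤ : ℕ∞) (Function.uncurry F) →
      (∀ t ∈ Icc (0:ℝ) T, ∀ x ∈ Icc (0:ℝ) 1, |F t x| ≤ Cb) →
      ContDiff ℝ (⊤ : ℕ∞) b →
      (∀ t ∈ Icc (0:ℝ) T, |b t| ≤ Cb) →
      Continuous (Function.uncurry ζ) →
      ContDiff ℝ (⊤ : ℕ∞) (Function.uncurry η) →
      (∀ t ∈ Ioo (0:ℝ) T, ∀ x ∈ Ioo (0:ℝ) 1,
        m * deriv (fun τ => deriv (fun σ => η σ x) τ) t +
          γ * deriv (deriv (deriv (deriv (η t)))) x -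
          (k/2) * deriv (deriv (η t)) x -
          (k/4) * deriv (fun ξ => F t ξ * deriv (η t) ξ) x -
          kv * deriv (fun τ => deriv (deriv (η τ)) x) t = ζ t x) →
      (∀ t ∈ Icc (0:ℝ) T, deriv (deriv (η t)) 0 = 0) →
      (∀ t ∈ Icc (0:ℝ) T, deriv (deriv (η t)) 1 = 0) →
      (∀ t ∈ Icc (0:ℝ) T, η t 0 = 0) →
      (∀ t ∈ Icc (0:ℝ) T,
        b t * η t 1 + γ * deriv (deriv (deriv (η t))) 1 - (k/2) * deriv (η t) 1 -
          (k/4) * F t 1 * deriv (η t) 1 - kv * deriv (fun τ => deriv (η τ) 1) t = 0) →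
      (∀ x ∈ Icc (0:ℝ) 1, η 0 x = 0) →
      (∀ x ∈ Icc (0:ℝ) 1, deriv (fun τ => η τ x) 0 = 0) →
      (∫ t in (0:ℝ)..T, ∫ x in (0:ℝ)..1, (ζ t x)^2) ≤ Z →
      ∀ t ∈ Icc (0:ℝ) T,
        (∫ x in (0:ℝ)..1, (deriv (fun τ => η τ x) t)^2) +
          (∫ x in (0:ℝ)..1, (deriv (η t) x)^2) +
          (∫ x in (0:ℝ)..1, (deriv (deriv (η t)) x)^2) ≤ C' := by
    -- constants
  have hC4nn : (0:ℝ) ≤ k^2*Cb^2/(16*kv) := by positivity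
  set C4 : ℝ := k^2*Cb^2/(16*kv) with hC4def
  set C3 : ℝ := C4 + Cb^2/kv with hC3def
  have hC3nn : 0 ≤ C3 := by rw [hC3def]; positivity
  set C2 : ℝ := 1/m + 4*C3/k with hC2def
  have hC2pos : 0 < C2 := by
    have h1 : 0 < 1/m := by positivity
    have h2 : 0 ≤ 4*C3/k := by positivity
    rw [hC2def]; linarith only [h1, h2]
  set M : ℝ := Real.exp (C2*T) * (|Z|/2 + 1) with hMdef
  have hMpos : 0 < M := by rw [hMdef]; positivity
  set c0 : ℝ := 2/m + 4/k + 2/γ with hc0def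
  have hc0pos : 0 < c0 := by rw [hc0def]; positivity
  refine ⟨c0 * M, by positivity, ?_⟩
  intro F b ζ η hF hFb hb hbB hζ hη hPDE hv20bc hv21bc hstr hbc hinit0 hinit1 hZint t ht
  -- joint smoothness of all relevant partial derivatives
  have hu1s := DB.dt hη
  have hu2s := DB.dt hu1s
  have hv1s := DB.dx hη
  have hv2s := DB.dx hv1s
  have hv3s := DB.dx hv2s
  have hv4s := DB.dx hv3s
  have hws := DB.dt hv1s
  have hzs := DB.dt hv2s
  -- energy pieces
  set A : ℝ → ℝ := fun s => ∫ x in (0:ℝ)..1, (dtf η s x)^2 with hAdef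
  set B : ℝ → ℝ := fun s => ∫ x in (0:ℝ)..1, (dxf η s x)^2 with hBdef
  set Cc : ℝ → ℝ := fun s => ∫ x in (0:ℝ)..1, (dxf (dxf η) s x)^2 with hCcdef
  set E : ℝ → ℝ := fun s => (m/2) * A s + (γ/2) * Cc s + (k/4) * B s with hEdef
  have hAnn : ∀ s, 0 ≤ A s := fun s =>
    intervalIntegral.integral_nonneg (by norm_num) (fun x _ => sq_nonneg _)
  have hBnn : ∀ s, 0 ≤ B s := fun s =>
    intervalIntegral.integral_nonneg (by norm_num) (fun x _ => sq_nonneg _)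
  have hCnn : ∀ s, 0 ≤ Cc s := fun s =>
    intervalIntegral.integral_nonneg (by norm_num) (fun x _ => sq_nonneg _)
  -- derivatives of the energy pieces
  have hA' : ∀ s, HasDerivAt A (∫ x in (0:ℝ)..1, 2 * dtf η s x * dtf (dtf η) s x) s := by
    intro s
    refine DB.hasDerivAt_int01 (fun r x => (dtf η r x)^2)
      (fun r x => 2 * dtf η r x * dtf (dtf η) r x)
      (by exact hu1s.continuous.pow 2)
      (by exact (continuous_const.mul hu1s.continuous).mul hu2s.continuous)
      (fun r x => by simpa using (DB.diffT hu1s r x).fun_pow 2) s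
  have hB' : ∀ s, HasDerivAt B (∫ x in (0:ℝ)..1, 2 * dxf η s x * dtf (dxf η) s x) s := by
    intro s
    refine DB.hasDerivAt_int01 (fun r x => (dxf η r x)^2)
      (fun r x => 2 * dxf η r x * dtf (dxf η) r x)
      (by exact hv1s.continuous.pow 2)
      (by exact (continuous_const.mul hv1s.continuous).mul hws.continuous)
      (fun r x => by simpa using (DB.diffT hv1s r x).fun_pow 2) s
  have hCc' : ∀ s, HasDerivAt Cc
      (∫ x in (0:ℝ)..1, 2 * dxf (dxf η) s x * dtf (dxf (dxf η)) s x) s := by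
    intro s
    refine DB.hasDerivAt_int01 (fun r x => (dxf (dxf η) r x)^2)
      (fun r x => 2 * dxf (dxf η) r x * dtf (dxf (dxf η)) r x)
      (by exact hv2s.continuous.pow 2)
      (by exact (continuous_const.mul hv2s.continuous).mul hzs.continuous)
      (fun r x => by simpa using (DB.diffT hv2s r x).fun_pow 2) s
  set eE : ℝ → ℝ := fun s =>
    (m/2) * (∫ x in (0:ℝ)..1, 2 * dtf η s x * dtf (dtf η) s x)
      + (γ/2) * (∫ x in (0:ℝ)..1, 2 * dxf (dxf η) s x * dtf (dxf (dxf η)) s x)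
      + (k/4) * (∫ x in (0:ℝ)..1, 2 * dxf η s x * dtf (dxf η) s x) with heEdef
  have hE' : ∀ s, HasDerivAt E (eE s) s := fun s =>
    (((hA' s).const_mul (m/2)).add ((hCc' s).const_mul (γ/2))).add ((hB' s).const_mul (k/4))
  -- the forcing term
  set φ : ℝ → ℝ := fun s => (1/2) * ∫ x in (0:ℝ)..1, (ζ s x)^2 with hφdef
  have hφc : Continuous φ :=
    continuous_const.mul
      (intervalIntegral.continuous_parametric_intervalIntegral_of_continuous'
        (μ := volume) (f := fun s x => (ζ s x)^2) (hζ.fun_pow 2) 0 1)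
  have hφ0 : ∀ s, 0 ≤ φ s := fun s =>
    mul_nonneg (by norm_num)
      (intervalIntegral.integral_nonneg (by norm_num) (fun x _ => sq_nonneg _))
  -- key differential inequality
  have key : ∀ s ∈ Ioo (0:ℝ) T, eE s ≤ C2 * E s + φ s := by
    intro s hs
    simp only [heEdef]
    have hsI : s ∈ Icc 0 T := Ioo_subset_Icc_self hs
    set u1 : ℝ → ℝ := dtf η s with hu1d
    set u2 : ℝ → ℝ := dtf (dtf η) s with hu2d
    set p1 : ℝ → ℝ := dxf η s with hp1d
    set p2 : ℝ → ℝ := dxf (dxf η) s with hp2d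
    set p3 : ℝ → ℝ := dxf (dxf (dxf η)) s with hp3d
    set p4 : ℝ → ℝ := dxf (dxf (dxf (dxf η))) s with hp4d
    set pw : ℝ → ℝ := dtf (dxf η) s with hpwd
    set pz : ℝ → ℝ := dtf (dxf (dxf η)) s with hpzd
    set D : ℝ → ℝ := fun x => deriv (fun ξ => F s ξ * p1 ξ) x with hDd
    -- continuity of slices
    have cu1 : Continuous u1 := contX hu1s.continuous s
    have cu2 : Continuous u2 := contX hu2s.continuous s
    have cp1 : Continuous p1 := contX hv1s.continuous s
    have cp2 : Continuous p2 := contX hv2s.continuous s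
    have cp3 : Continuous p3 := contX hv3s.continuous s
    have cp4 : Continuous p4 := contX hv4s.continuous s
    have cpw : Continuous pw := contX hws.continuous s
    have cpz : Continuous pz := contX hzs.continuous s
    have cζ : Continuous (fun x => ζ s x) := contX hζ s
    have hFv : ContDiff ℝ (⊤ : ℕ∞) (fun ξ => F s ξ * p1 ξ) := (cdX hF s).mul (cdX hv1s s)
    have cD : Continuous D := hFv.continuous_deriv (by simp)
    have hDr : ∀ x, HasDerivAt (fun ξ => F s ξ * p1 ξ) (D x) x := fun x =>
      ((hFv.differentiable (by simp)) x).hasDerivAt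
    -- spatial derivatives of time-derivatives (mixed partials)
    have hwd : ∀ x, HasDerivAt u1 (pw x) x := fun x => by
      have h := DB.diffX hu1s s x
      rwa [← DB.mixed hη s x] at h
    have hzd : ∀ x, HasDerivAt pw (pz x) x := fun x => by
      have h := DB.diffX hws s x
      rwa [← DB.mixed hv1s s x] at h
    -- u1 vanishes at x = 0
    have hu10 : u1 0 = 0 := by
      have hev : (fun τ => η τ 0) =ᶠ[nhds s] (fun _ => (0:ℝ)) :=
        Filter.eventuallyEq_of_mem (Ioo_mem_nhds hs.1 hs.2)
          (fun τ hτ => hstr τ (Ioo_subset_Icc_self hτ))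
      have : deriv (fun τ => η τ 0) s = deriv (fun _ : ℝ => (0:ℝ)) s := hev.deriv_eq
      simpa [DB.dtf, hu1d] using this
    -- PDE extended to the closed interval by continuity
    have hPDEc : ∀ x ∈ Icc (0:ℝ) 1,
        m * u2 x + γ * p4 x - (k/2) * p2 x - (k/4) * D x - kv * pz x = ζ s x := by
      have heq : EqOn
          (fun x => m * u2 x + γ * p4 x - (k/2) * p2 x - (k/4) * D x - kv * pz x)
          (fun x => ζ s x) (Ioo 0 1) := fun x hx => hPDE s hs x hx
      have hcont : Continuous
          (fun x => m * u2 x + γ * p4 x - (k/2) * p2 x - (k/4) * D x - kv * pz x) := by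
        fun_prop
      have hcl := heq.closure hcont cζ
      rw [closure_Ioo (by norm_num : (0:ℝ) ≠ 1)] at hcl
      exact fun x hx => hcl hx
    -- boundary facts
    have hp20 : p2 0 = 0 := hv20bc s hsI
    have hp21 : p2 1 = 0 := hv21bc s hsI
    have hbc1 : b s * η s 1 + γ * p3 1 - (k/2) * p1 1 - (k/4) * F s 1 * p1 1
        - kv * pw 1 = 0 := hbc s hsI
    -- pull out factors of 2
    have e1 : (∫ x in (0:ℝ)..1, 2 * u1 x * u2 x) = 2 * ∫ x in (0:ℝ)..1, u1 x * u2 x := by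
      rw [← intervalIntegral.integral_const_mul]; congr 1; funext x; ring
    have e2 : (∫ x in (0:ℝ)..1, 2 * p2 x * pz x) = 2 * ∫ x in (0:ℝ)..1, p2 x * pz x := by
      rw [← intervalIntegral.integral_const_mul]; congr 1; funext x; ring
    have e3 : (∫ x in (0:ℝ)..1, 2 * p1 x * pw x) = 2 * ∫ x in (0:ℝ)..1, p1 x * pw x := by
      rw [← intervalIntegral.integral_const_mul]; congr 1; funext x; ring
    -- use the PDE under the integral sign
    have hJ1 : m * (∫ x in (0:ℝ)..1, u1 x * u2 x)
        = (∫ x in (0:ℝ)..1, u1 x * ζ s x)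
          + (-γ) * (∫ x in (0:ℝ)..1, u1 x * p4 x)
          + (k/2) * (∫ x in (0:ℝ)..1, u1 x * p2 x)
          + (k/4) * (∫ x in (0:ℝ)..1, u1 x * D x)
          + kv * (∫ x in (0:ℝ)..1, u1 x * pz x) := by
      rw [← intervalIntegral.integral_const_mul, ← intervalIntegral.integral_const_mul,
        ← intervalIntegral.integral_const_mul, ← intervalIntegral.integral_const_mul,
        ← intervalIntegral.integral_const_mul]
      rw [← intervalIntegral.integral_add ((cu1.fun_mul cζ).intervalIntegrable 0 1)
            ((continuous_const.fun_mul (cu1.fun_mul cp4)).intervalIntegrable 0 1),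
          ← intervalIntegral.integral_add
            (((cu1.fun_mul cζ).fun_add (continuous_const.fun_mul (cu1.fun_mul cp4))).intervalIntegrable 0 1)
            ((continuous_const.fun_mul (cu1.fun_mul cp2)).intervalIntegrable 0 1),
          ← intervalIntegral.integral_add
            ((((cu1.fun_mul cζ).fun_add (continuous_const.fun_mul (cu1.fun_mul cp4))).fun_add
              (continuous_const.fun_mul (cu1.fun_mul cp2))).intervalIntegrable 0 1)
            ((continuous_const.fun_mul (cu1.fun_mul cD)).intervalIntegrable 0 1),
          ← intervalIntegral.integral_add
            (((((cu1.fun_mul cζ).fun_add (continuous_const.fun_mul (cu1.fun_mul cp4))).fun_add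
              (continuous_const.fun_mul (cu1.fun_mul cp2))).fun_add
              (continuous_const.fun_mul (cu1.fun_mul cD))).intervalIntegrable 0 1)
            ((continuous_const.fun_mul (cu1.fun_mul cpz)).intervalIntegrable 0 1)]
      apply intervalIntegral.integral_congr
      intro x hx
      rw [uIcc_of_le (by norm_num : (0:ℝ) ≤ 1)] at hx
      have h := hPDEc x hx
      linear_combination (u1 x) * h
    -- integration by parts
    have ibp1 : ∫ x in (0:ℝ)..1, u1 x * p4 x
        = u1 1 * p3 1 - u1 0 * p3 0 - ∫ x in (0:ℝ)..1, pw x * p3 x :=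
      intervalIntegral.integral_mul_deriv_eq_deriv_mul
        (fun x _ => hwd x) (fun x _ => DB.diffX hv3s s x)
        (cpw.intervalIntegrable 0 1) (cp4.intervalIntegrable 0 1)
    have ibp2 : ∫ x in (0:ℝ)..1, pw x * p3 x
        = pw 1 * p2 1 - pw 0 * p2 0 - ∫ x in (0:ℝ)..1, pz x * p2 x :=
      intervalIntegral.integral_mul_deriv_eq_deriv_mul
        (fun x _ => hzd x) (fun x _ => DB.diffX hv2s s x)
        (cpz.intervalIntegrable 0 1) (cp3.intervalIntegrable 0 1)
    have ibp3 : ∫ x in (0:ℝ)..1, u1 x * p2 x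
        = u1 1 * p1 1 - u1 0 * p1 0 - ∫ x in (0:ℝ)..1, pw x * p1 x :=
      intervalIntegral.integral_mul_deriv_eq_deriv_mul
        (fun x _ => hwd x) (fun x _ => DB.diffX hv1s s x)
        (cpw.intervalIntegrable 0 1) (cp2.intervalIntegrable 0 1)
    have ibp4 : ∫ x in (0:ℝ)..1, u1 x * D x
        = u1 1 * (F s 1 * p1 1) - u1 0 * (F s 0 * p1 0)
          - ∫ x in (0:ℝ)..1, pw x * (F s x * p1 x) :=
      intervalIntegral.integral_mul_deriv_eq_deriv_mul
        (fun x _ => hwd x) (fun x _ => hDr x)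
        (cpw.intervalIntegrable 0 1) (cD.intervalIntegrable 0 1)
    have ibp5 : ∫ x in (0:ℝ)..1, u1 x * pz x
        = u1 1 * pw 1 - u1 0 * pw 0 - ∫ x in (0:ℝ)..1, pw x * pw x :=
      intervalIntegral.integral_mul_deriv_eq_deriv_mul
        (fun x _ => hwd x) (fun x _ => hzd x)
        (cpw.intervalIntegrable 0 1) (cpz.intervalIntegrable 0 1)
    -- commutations
    have c1 : (∫ x in (0:ℝ)..1, pz x * p2 x) = ∫ x in (0:ℝ)..1, p2 x * pz x :=
      intervalIntegral.integral_congr (fun x _ => mul_comm _ _)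
    have c2 : (∫ x in (0:ℝ)..1, pw x * p1 x) = ∫ x in (0:ℝ)..1, p1 x * pw x :=
      intervalIntegral.integral_congr (fun x _ => mul_comm _ _)
    have cww : (∫ x in (0:ℝ)..1, pw x * pw x) = ∫ x in (0:ℝ)..1, (pw x)^2 :=
      intervalIntegral.integral_congr (fun x _ => (sq (pw x)).symm)
    -- main energy-derivative identity
    have hmain : (m/2) * (∫ x in (0:ℝ)..1, 2 * u1 x * u2 x)
        + (γ/2) * (∫ x in (0:ℝ)..1, 2 * p2 x * pz x)
        + (k/4) * (∫ x in (0:ℝ)..1, 2 * p1 x * pw x)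
        = (∫ x in (0:ℝ)..1, u1 x * ζ s x)
          - kv * (∫ x in (0:ℝ)..1, (pw x)^2)
          - (k/4) * (∫ x in (0:ℝ)..1, pw x * (F s x * p1 x))
          + u1 1 * (b s * η s 1) := by
      simp only [hu10, hp20, hp21, mul_zero, zero_mul, sub_zero] at ibp1 ibp2 ibp3 ibp4 ibp5
      linear_combination (m/2)*e1 + (γ/2)*e2 + (k/4)*e3 + hJ1 + (-γ)*ibp1 + γ*ibp2
        + (k/2)*ibp3 + (k/4)*ibp4 + kv*ibp5 + (-γ)*c1 + (-(k/2))*c2 + (-kv)*cww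
        - (u1 1)*hbc1
    -- estimates
    have hAs : A s = ∫ x in (0:ℝ)..1, (u1 x)^2 := rfl
    have hBs : B s = ∫ x in (0:ℝ)..1, (p1 x)^2 := rfl
    have hφs : φ s = (1/2) * ∫ x in (0:ℝ)..1, (ζ s x)^2 := rfl
    have hWnn : 0 ≤ ∫ x in (0:ℝ)..1, (pw x)^2 :=
      intervalIntegral.integral_nonneg (by norm_num) (fun x _ => sq_nonneg _)
    have est1 : (∫ x in (0:ℝ)..1, u1 x * ζ s x) ≤ (1/2) * A s + φ s := by
      have h1 : (∫ x in (0:ℝ)..1, u1 x * ζ s x)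
          ≤ ∫ x in (0:ℝ)..1, ((1/2) * (u1 x)^2 + (1/2) * (ζ s x)^2) := by
        apply intervalIntegral.integral_mono_on (by norm_num)
          ((cu1.fun_mul cζ).intervalIntegrable 0 1)
          (((continuous_const.fun_mul (cu1.fun_pow 2)).fun_add
            (continuous_const.fun_mul (cζ.fun_pow 2))).intervalIntegrable 0 1)
        intro x _
        nlinarith only [sq_nonneg (u1 x - ζ s x)]
      have h2 : (∫ x in (0:ℝ)..1, ((1/2) * (u1 x)^2 + (1/2) * (ζ s x)^2))
          = (1/2) * A s + φ s := by
        rw [intervalIntegral.integral_add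
            ((continuous_const.fun_mul (cu1.fun_pow 2)).intervalIntegrable 0 1)
            ((continuous_const.fun_mul (cζ.fun_pow 2)).intervalIntegrable 0 1),
          intervalIntegral.integral_const_mul, intervalIntegral.integral_const_mul,
          hAs, hφs]
      rw [← h2]; exact h1
    have est2 : -(k/4) * (∫ x in (0:ℝ)..1, pw x * (F s x * p1 x))
        ≤ (kv/4) * (∫ x in (0:ℝ)..1, (pw x)^2) + C4 * B s := by
      have h1 : -(k/4) * (∫ x in (0:ℝ)..1, pw x * (F s x * p1 x))
          = ∫ x in (0:ℝ)..1, -(k/4) * (pw x * (F s x * p1 x)) :=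
        (intervalIntegral.integral_const_mul _ _).symm
      have h2 : (∫ x in (0:ℝ)..1, -(k/4) * (pw x * (F s x * p1 x)))
          ≤ ∫ x in (0:ℝ)..1, ((kv/4) * (pw x)^2 + C4 * (p1 x)^2) := by
        apply intervalIntegral.integral_mono_on (by norm_num)
          ((continuous_const.fun_mul (cpw.fun_mul ((contX hF.continuous s).fun_mul cp1))).intervalIntegrable 0 1)
          (((continuous_const.fun_mul (cpw.fun_pow 2)).fun_add
            (continuous_const.fun_mul (cp1.fun_pow 2))).intervalIntegrable 0 1)
        intro x hx
        have hFx := hFb s hsI x hx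
        have habs : -(pw x * (F s x * p1 x)) ≤ Cb * (|pw x| * |p1 x|) := by
          calc -(pw x * (F s x * p1 x)) ≤ |pw x * (F s x * p1 x)| := neg_le_abs _
            _ = |F s x| * (|pw x| * |p1 x|) := by rw [abs_mul, abs_mul]; ring
            _ ≤ Cb * (|pw x| * |p1 x|) := mul_le_mul_of_nonneg_right hFx (by positivity)
        have hsq : (k/4)*Cb*(|pw x| * |p1 x|) ≤ (kv/4)*(pw x)^2 + C4*(p1 x)^2 := by
          have h := sq_nonneg (kv * |pw x| - (k*Cb/2) * |p1 x|)
          have h2' : kv*(k*Cb)*(|pw x| * |p1 x|) ≤ kv^2*(pw x)^2 + (k*Cb/2)^2*(p1 x)^2 := by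
            nlinarith only [h, sq_abs (pw x), sq_abs (p1 x)]
          calc (k/4)*Cb*(|pw x| * |p1 x|)
              = (kv*(k*Cb)*(|pw x| * |p1 x|))/(4*kv) := by field_simp
            _ ≤ (kv^2*(pw x)^2 + (k*Cb/2)^2*(p1 x)^2)/(4*kv) :=
                (div_le_div_iff_of_pos_right (by positivity)).2 h2'
            _ = (kv/4)*(pw x)^2 + C4*(p1 x)^2 := by rw [hC4def]; field_simp; ring
        calc -(k/4) * (pw x * (F s x * p1 x)) = (k/4) * (-(pw x * (F s x * p1 x))) := by ring
          _ ≤ (k/4) * (Cb * (|pw x| * |p1 x|)) :=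
              mul_le_mul_of_nonneg_left habs (by positivity)
          _ = (k/4)*Cb*(|pw x| * |p1 x|) := by ring
          _ ≤ (kv/4)*(pw x)^2 + C4*(p1 x)^2 := hsq
      have h3 : (∫ x in (0:ℝ)..1, ((kv/4) * (pw x)^2 + C4 * (p1 x)^2))
          = (kv/4) * (∫ x in (0:ℝ)..1, (pw x)^2) + C4 * B s := by
        rw [intervalIntegral.integral_add
            ((continuous_const.fun_mul (cpw.fun_pow 2)).intervalIntegrable 0 1)
            ((continuous_const.fun_mul (cp1.fun_pow 2)).intervalIntegrable 0 1),
          intervalIntegral.integral_const_mul, intervalIntegral.integral_const_mul, hBs]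
      rw [h1, ← h3]; exact h2
    have ftc1 : η s 1 = ∫ x in (0:ℝ)..1, p1 x := by
      have h := intervalIntegral.integral_eq_sub_of_hasDerivAt
        (f := η s) (f' := p1) (fun x _ => DB.diffX hη s x) (cp1.intervalIntegrable 0 1)
      rw [hstr s hsI] at h; linarith only [h]
    have ftc2 : u1 1 = ∫ x in (0:ℝ)..1, pw x := by
      have h := intervalIntegral.integral_eq_sub_of_hasDerivAt
        (f := u1) (f' := pw) (fun x _ => hwd x) (cpw.intervalIntegrable 0 1)
      rw [hu10] at h; linarith only [h]
    have hsq1 : (u1 1)^2 ≤ ∫ x in (0:ℝ)..1, (pw x)^2 := by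
      rw [ftc2]; exact DB.sq_integral_le pw cpw
    have hsq2 : (η s 1)^2 ≤ B s := by
      rw [ftc1, hBs]; exact DB.sq_integral_le p1 cp1
    have est3 : u1 1 * (b s * η s 1)
        ≤ (kv/4) * (∫ x in (0:ℝ)..1, (pw x)^2) + (Cb^2/kv) * B s := by
      have hbs := hbB s hsI
      have e : u1 1 * (b s * η s 1) ≤ Cb * (|u1 1| * |η s 1|) := by
        calc u1 1 * (b s * η s 1) ≤ |u1 1 * (b s * η s 1)| := le_abs_self _
          _ = |b s| * (|u1 1| * |η s 1|) := by rw [abs_mul, abs_mul]; ring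
          _ ≤ Cb * (|u1 1| * |η s 1|) := mul_le_mul_of_nonneg_right hbs (by positivity)
      have e2 : Cb * (|u1 1| * |η s 1|) ≤ (kv/4)*(u1 1)^2 + (Cb^2/kv)*(η s 1)^2 := by
        have h := sq_nonneg (kv * |u1 1| - 2*Cb * |η s 1|)
        have h2 : kv*(4*Cb)*(|u1 1| * |η s 1|) ≤ kv^2*(u1 1)^2 + 4*Cb^2*(η s 1)^2 := by
          nlinarith only [h, sq_abs (u1 1), sq_abs (η s 1)]
        calc Cb * (|u1 1| * |η s 1|) = (kv*(4*Cb)*(|u1 1| * |η s 1|))/(4*kv) := by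
              field_simp
          _ ≤ (kv^2*(u1 1)^2 + 4*Cb^2*(η s 1)^2)/(4*kv) :=
              (div_le_div_iff_of_pos_right (by positivity)).2 h2
          _ = (kv/4)*(u1 1)^2 + (Cb^2/kv)*(η s 1)^2 := by field_simp
      have e3 : (kv/4)*(u1 1)^2 ≤ (kv/4)*(∫ x in (0:ℝ)..1, (pw x)^2) :=
        mul_le_mul_of_nonneg_left hsq1 (by positivity)
      have e4 : (Cb^2/kv)*(η s 1)^2 ≤ (Cb^2/kv)*B s :=
        mul_le_mul_of_nonneg_left hsq2 (by positivity)
      linarith only [e, e2, e3, e4]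
    -- close the key inequality
    have hC3B : C3 * B s = C4 * B s + (Cb^2/kv) * B s := by rw [hC3def]; ring
    have final2 : (1/2)*A s + C3*B s ≤ C2*E s := by
      have expand : C2 * E s - ((1/2)*A s + C3*B s)
          = (γ/(2*m))*Cc s + (k/(4*m))*B s + (2*C3*m/k)*A s + (2*γ*C3/k)*Cc s := by
        simp only [hC2def, hEdef]
        field_simp
        ring
      have t1 : 0 ≤ (γ/(2*m))*Cc s := mul_nonneg (by positivity) (hCnn s)
      have t2 : 0 ≤ (k/(4*m))*B s := mul_nonneg (by positivity) (hBnn s)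
      have t3 : 0 ≤ (2*C3*m/k)*A s := mul_nonneg (by positivity) (hAnn s)
      have t4 : 0 ≤ (2*γ*C3/k)*Cc s := mul_nonneg (by positivity) (hCnn s)
      linarith only [t1, t2, t3, t4, expand]
    rw [hmain]
    have hkvW : 0 ≤ kv * (∫ x in (0:ℝ)..1, (pw x)^2) := mul_nonneg hkv.le hWnn
    linarith only [est1, est2, est3, hC3B, final2, hkvW]

  -- Gronwall argument
  have hEc : Continuous E :=
    Differentiable.continuous (fun s => (hE' s).differentiableAt)
  have hprim : ∀ s : ℝ, HasDerivAt (fun r => ∫ σ in (0:ℝ)..r, φ σ) (φ s) s := fun s =>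
    intervalIntegral.integral_hasDerivAt_right (hφc.intervalIntegrable 0 s)
      ⟨univ, Filter.univ_mem, hφc.aestronglyMeasurable.restrict⟩ hφc.continuousAt
  have hprimc : Continuous (fun r => ∫ σ in (0:ℝ)..r, φ σ) :=
    Differentiable.continuous (fun s => (hprim s).differentiableAt)
  set Ψ : ℝ → ℝ := fun r => E r * Real.exp (-C2 * r) - ∫ σ in (0:ℝ)..r, φ σ with hΨdef
  have hexp : ∀ s : ℝ, HasDerivAt (fun r : ℝ => Real.exp (-C2 * r))
      (Real.exp (-C2*s) * (-C2)) s := fun s => by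
    have h1 : HasDerivAt (fun r : ℝ => -C2 * r) (-C2) s := by
      simpa using (hasDerivAt_id s).const_mul (-C2)
    have h2 := (Real.hasDerivAt_exp (-C2*s)).comp s h1
    simpa [Function.comp_def] using h2
  have hΨd : ∀ s : ℝ, HasDerivAt Ψ
      (eE s * Real.exp (-C2*s) + E s * (Real.exp (-C2*s) * (-C2)) - φ s) s := fun s =>
    ((hE' s).mul (hexp s)).sub (hprim s)
  have hΨderiv : ∀ s ∈ Ioo (0:ℝ) T, deriv Ψ s ≤ 0 := by
    intro s hs
    rw [(hΨd s).deriv]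
    have hk' := key s hs
    have hexp1 : Real.exp (-C2*s) ≤ 1 :=
      Real.exp_le_one_iff.2 (by nlinarith only [hs.1, hC2pos])
    have hexp0 : (0:ℝ) < Real.exp (-C2*s) := Real.exp_pos _
    linarith only [mul_le_mul_of_nonneg_right hk' hexp0.le,
      mul_le_mul_of_nonneg_left hexp1 (hφ0 s), hφ0 s]
  have hΨcont : ContinuousOn Ψ (Icc 0 T) :=
    ((hEc.mul (Real.continuous_exp.comp (continuous_const.mul continuous_id))).sub
      hprimc).continuousOn
  have hanti : AntitoneOn Ψ (Icc 0 T) := by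
    apply antitoneOn_of_deriv_nonpos (convex_Icc 0 T) hΨcont
    · intro s hs
      exact (hΨd s).differentiableAt.differentiableWithinAt
    · intro s hs
      rw [interior_Icc] at hs
      exact hΨderiv s hs
  -- initial energy vanishes
  have hA0 : A 0 = 0 := by
    have heq : EqOn (fun x => (dtf η 0 x)^2) (fun _ => (0:ℝ)) (uIcc (0:ℝ) 1) := fun x hx => by
      rw [uIcc_of_le (by norm_num : (0:ℝ) ≤ 1)] at hx
      simp [DB.dtf, hinit1 x hx]
    calc A 0 = ∫ x in (0:ℝ)..1, (0:ℝ) := intervalIntegral.integral_congr heq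
      _ = 0 := by simp
  have hIoo1 : EqOn (fun x => dxf η 0 x) (fun _ => (0:ℝ)) (Ioo 0 1) := fun x hx => by
    have hev : (η 0) =ᶠ[nhds x] (fun _ => (0:ℝ)) :=
      Filter.eventuallyEq_of_mem (Ioo_mem_nhds hx.1 hx.2)
        (fun y hy => hinit0 y (Ioo_subset_Icc_self hy))
    have h2 := hev.deriv_eq
    simpa [DB.dxf] using h2.trans (deriv_const x 0)
  have hIcc1 : EqOn (fun x => dxf η 0 x) (fun _ => (0:ℝ)) (Icc 0 1) := by
    have h2 := hIoo1.closure (contX hv1s.continuous 0) continuous_const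
    rwa [closure_Ioo (by norm_num : (0:ℝ) ≠ 1)] at h2
  have hB0 : B 0 = 0 := by
    have heq : EqOn (fun x => (dxf η 0 x)^2) (fun _ => (0:ℝ)) (uIcc (0:ℝ) 1) := fun x hx => by
      rw [uIcc_of_le (by norm_num : (0:ℝ) ≤ 1)] at hx
      simp [hIcc1 hx]
    calc B 0 = ∫ x in (0:ℝ)..1, (0:ℝ) := intervalIntegral.integral_congr heq
      _ = 0 := by simp
  have hIoo2 : EqOn (fun x => dxf (dxf η) 0 x) (fun _ => (0:ℝ)) (Ioo 0 1) := fun x hx => by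
    have hev : (dxf η 0) =ᶠ[nhds x] (fun _ => (0:ℝ)) :=
      Filter.eventuallyEq_of_mem (Ioo_mem_nhds hx.1 hx.2) (fun y hy => hIoo1 hy)
    have h2 := hev.deriv_eq
    simpa [DB.dxf] using h2.trans (deriv_const x 0)
  have hIcc2 : EqOn (fun x => dxf (dxf η) 0 x) (fun _ => (0:ℝ)) (Icc 0 1) := by
    have h2 := hIoo2.closure (contX hv2s.continuous 0) continuous_const
    rwa [closure_Ioo (by norm_num : (0:ℝ) ≠ 1)] at h2
  have hCc0 : Cc 0 = 0 := by
    have heq : EqOn (fun x => (dxf (dxf η) 0 x)^2) (fun _ => (0:ℝ)) (uIcc (0:ℝ) 1) :=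
      fun x hx => by
        rw [uIcc_of_le (by norm_num : (0:ℝ) ≤ 1)] at hx
        simp [hIcc2 hx]
    calc Cc 0 = ∫ x in (0:ℝ)..1, (0:ℝ) := intervalIntegral.integral_congr heq
      _ = 0 := by simp
  have hE0 : E 0 = 0 := by
    have : E 0 = (m/2) * A 0 + (γ/2) * Cc 0 + (k/4) * B 0 := rfl
    rw [this, hA0, hB0, hCc0]; ring
  have hΨ0 : Ψ 0 = 0 := by
    have : Ψ 0 = E 0 * Real.exp (-C2 * 0) - ∫ σ in (0:ℝ)..(0:ℝ), φ σ := rfl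
    rw [this, hE0, intervalIntegral.integral_same]; ring
  have hΨt : Ψ t ≤ 0 :=
    (hanti (left_mem_Icc.2 hT.le) ht ht.1).trans_eq hΨ0
  -- bound the forcing integral
  have hint0T : (∫ σ in (0:ℝ)..t, φ σ) ≤ |Z|/2 + 1 := by
    have hadj : (∫ σ in (0:ℝ)..t, φ σ) + (∫ σ in t..T, φ σ) = ∫ σ in (0:ℝ)..T, φ σ :=
      intervalIntegral.integral_add_adjacent_intervals (hφc.intervalIntegrable 0 t)
        (hφc.intervalIntegrable t T)
    have h2 : 0 ≤ ∫ σ in t..T, φ σ :=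
      intervalIntegral.integral_nonneg ht.2 (fun σ _ => hφ0 σ)
    have h3 : (∫ σ in (0:ℝ)..T, φ σ)
        = (1/2) * ∫ σ in (0:ℝ)..T, ∫ x in (0:ℝ)..1, (ζ σ x)^2 := by
      simp only [hφdef]
      rw [intervalIntegral.integral_const_mul]
    have h5 : Z ≤ |Z| := le_abs_self Z
    linarith only [hadj, h2, h3, hZint, h5]
  have hEt : E t ≤ M := by
    have h1 : E t * Real.exp (-C2*t) ≤ ∫ σ in (0:ℝ)..t, φ σ := by
      have h0 : Ψ t = E t * Real.exp (-C2 * t) - ∫ σ in (0:ℝ)..t, φ σ := rfl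
      rw [h0] at hΨt
      linarith only [hΨt]
    have h2 : Real.exp (C2*t) ≤ Real.exp (C2*T) :=
      Real.exp_le_exp.2 (mul_le_mul_of_nonneg_left ht.2 hC2pos.le)
    have h3 : Real.exp (-C2*t) * Real.exp (C2*t) = 1 := by
      rw [← Real.exp_add, show -C2*t + C2*t = 0 by ring, Real.exp_zero]
    calc E t = (E t * Real.exp (-C2*t)) * Real.exp (C2*t) := by
          rw [mul_assoc, h3, mul_one]
      _ ≤ (∫ σ in (0:ℝ)..t, φ σ) * Real.exp (C2*t) :=
          mul_le_mul_of_nonneg_right h1 (Real.exp_pos _).le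
      _ ≤ (|Z|/2 + 1) * Real.exp (C2*t) :=
          mul_le_mul_of_nonneg_right hint0T (Real.exp_pos _).le
      _ ≤ (|Z|/2 + 1) * Real.exp (C2*T) :=
          mul_le_mul_of_nonneg_left h2 (by positivity)
      _ = M := by rw [hMdef]; ring
  -- conclude
  have hEexp : (m/2) * A t + (γ/2) * Cc t + (k/4) * B t ≤ M := by
    have h0 : E t = (m/2) * A t + (γ/2) * Cc t + (k/4) * B t := rfl
    exact h0 ▸ hEt
  have tA : 0 ≤ (γ/2) * Cc t := mul_nonneg (by positivity) (hCnn t)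
  have tB : 0 ≤ (k/4) * B t := mul_nonneg (by positivity) (hBnn t)
  have tC : 0 ≤ (m/2) * A t := mul_nonneg (by positivity) (hAnn t)
  have tD : 0 ≤ (γ/2) * Cc t := tA
  have hA2 : A t ≤ (2/m) * M := by
    have h2 : (m/2) * A t ≤ M := by linarith only [hEexp, tA, tB]
    have h4 : A t = (2/m) * ((m/2) * A t) := by field_simp
    rw [h4]
    exact mul_le_mul_of_nonneg_left h2 (by positivity)
  have hB2 : B t ≤ (4/k) * M := by
    have h2 : (k/4) * B t ≤ M := by linarith only [hEexp, tA, tC]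
    have h4 : B t = (4/k) * ((k/4) * B t) := by field_simp
    rw [h4]
    exact mul_le_mul_of_nonneg_left h2 (by positivity)
  have hC2' : Cc t ≤ (2/γ) * M := by
    have h2 : (γ/2) * Cc t ≤ M := by linarith only [hEexp, tB, tC]
    have h4 : Cc t = (2/γ) * ((γ/2) * Cc t) := by field_simp
    rw [h4]
    exact mul_le_mul_of_nonneg_left h2 (by positivity)
  have hsum : c0 * M = (2/m) * M + (4/k) * M + (2/γ) * M := by rw [hc0def]; ring
  show A t + B t + Cc t ≤ c0 * M
  exact le_trans (add_le_add (add_le_add hA2 hB2) hC2') hsum.ge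
end
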